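/- arXiv:2211.07470 — 7 statements merged into one kernel-verified Lean document; each statement's English description precedes it below -/
import Mathlib

section
/- (Infinite iteration lemma.) Let T be a topological space, and let B, S ⊆ T be closed subsets with B ∩ S = ∅. Write ∂_T(S) = S ∩ closure(T ∖ S). Let φ : T → T be a homeomorphism restricting to the identity on B such that (i) φ^k(S) ∩ S = ∅ for every integer k ≥ 1, and (ii) the union ⋃_{k≥i} φ^k(S) is a closed subset of T for every integer i ≥ 0. Let h be a homeomorphism of the subspace S restricting to the identity on ∂_T(S). Then the subsets φ^k(S), k ≥ 0, are pairwise disjoint, and the map h^{φ^∞} : T → T defined by t ↦ φ^k(h(φ^{-k}(t))) if t ∈ φ^k(S) for some (necessarily unique) k ≥ 0, and t ↦ t otherwise, is a well-defined homeomorphism of T restricting to the identity on B. -/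
open Set

section Aux

variable {T : Type*} [TopologicalSpace T]

/-- The `k`-fold iterate of a homeomorphism, as a homeomorphism. -/
def iterH (φ : T ≃ₜ T) : ℕ → (T ≃ₜ T)
  | 0 => Homeomorph.refl T
  | (k + 1) => (iterH φ k).trans φ

lemma iterH_coe (φ : T ≃ₜ T) (k : ℕ) : ⇑(iterH φ k) = (⇑φ)^[k] := by
  induction k with
  | zero => rfl
  | succ n ih =>
    rw [Function.iterate_succ']
    funext t
    simp [iterH, ih]

lemma iterH_symm_coe (φ : T ≃ₜ T) (k : ℕ) : ⇑(iterH φ k).symm = (⇑φ.symm)^[k] := by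
  induction k with
  | zero => rfl
  | succ n ih =>
    rw [Function.iterate_succ]
    funext t
    simp [iterH, ih]

lemma iter_left_inv (φ : T ≃ₜ T) (k : ℕ) (t : T) : (⇑φ)^[k] ((⇑φ.symm)^[k] t) = t := by
  rw [← iterH_symm_coe φ k, ← iterH_coe φ k]; exact (iterH φ k).apply_symm_apply t

lemma iter_right_inv (φ : T ≃ₜ T) (k : ℕ) (t : T) : (⇑φ.symm)^[k] ((⇑φ)^[k] t) = t := by
  rw [← iterH_symm_coe φ k, ← iterH_coe φ k]; exact (iterH φ k).symm_apply_apply t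

lemma mem_iter_image_iff (φ : T ≃ₜ T) (S : Set T) (k : ℕ) (t : T) :
    t ∈ (⇑φ)^[k] '' S ↔ (⇑φ.symm)^[k] t ∈ S := by
  constructor
  · rintro ⟨x, hx, rfl⟩; rwa [iter_right_inv]
  · intro ht; exact ⟨_, ht, iter_left_inv φ k t⟩

open Classical in
/-- The infinite iterate map: `t ∈ φᵏ(S)` is sent to `φᵏ(h(φ⁻ᵏ(t)))`, other points fixed. -/
noncomputable def Fmap (φ : T ≃ₜ T) (S : Set T) (h : ↥S ≃ₜ ↥S) : T → T :=
  fun t => if ht : ∃ k : ℕ, (⇑φ.symm)^[k] t ∈ S then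
    (⇑φ)^[Nat.find ht] ((h ⟨(⇑φ.symm)^[Nat.find ht] t, Nat.find_spec ht⟩ : ↥S) : T)
  else t

lemma Fmap_apply (φ : T ≃ₜ T) (S : Set T) (h : ↥S ≃ₜ ↥S)
    (huniq : ∀ (t : T) (k l : ℕ), (⇑φ.symm)^[k] t ∈ S → (⇑φ.symm)^[l] t ∈ S → k = l)
    (k : ℕ) (t : T) (ht : (⇑φ.symm)^[k] t ∈ S) :
    Fmap φ S h t = (⇑φ)^[k] ((h ⟨(⇑φ.symm)^[k] t, ht⟩ : ↥S) : T) := by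
  classical
  have hex : ∃ k : ℕ, (⇑φ.symm)^[k] t ∈ S := ⟨k, ht⟩
  unfold Fmap
  rw [dif_pos hex]
  have hk : Nat.find hex = k := huniq t _ k (Nat.find_spec hex) ht
  subst hk
  rfl

lemma Fmap_apply_of_not (φ : T ≃ₜ T) (S : Set T) (h : ↥S ≃ₜ ↥S)
    (t : T) (ht : ¬ ∃ k : ℕ, (⇑φ.symm)^[k] t ∈ S) : Fmap φ S h t = t := by
  unfold Fmap; rw [dif_neg ht]

lemma Fmap_inv (φ : T ≃ₜ T) (S : Set T) (h : ↥S ≃ₜ ↥S)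
    (huniq : ∀ (t : T) (k l : ℕ), (⇑φ.symm)^[k] t ∈ S → (⇑φ.symm)^[l] t ∈ S → k = l)
    (t : T) : Fmap φ S h.symm (Fmap φ S h t) = t := by
  by_cases hex : ∃ k : ℕ, (⇑φ.symm)^[k] t ∈ S
  · obtain ⟨k, hk⟩ := hex
    rw [Fmap_apply φ S h huniq k t hk]
    set y : ↥S := h ⟨(⇑φ.symm)^[k] t, hk⟩ with hy
    have hmem : (⇑φ.symm)^[k] ((⇑φ)^[k] (y : T)) ∈ S := by
      rw [iter_right_inv]; exact y.2
    rw [Fmap_apply φ S h.symm huniq k _ hmem]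
    have : (⟨(⇑φ.symm)^[k] ((⇑φ)^[k] (y : T)), hmem⟩ : ↥S) = y :=
      Subtype.ext (iter_right_inv φ k (y : T))
    rw [this, hy, Homeomorph.symm_apply_apply]
    exact iter_left_inv φ k t
  · rw [Fmap_apply_of_not φ S h t hex, Fmap_apply_of_not φ S h.symm t hex]

lemma Fmap_continuous (φ : T ≃ₜ T) (S : Set T) (hS : IsClosed S) (h : ↥S ≃ₜ ↥S)
    (huniq : ∀ (t : T) (k l : ℕ), (⇑φ.symm)^[k] t ∈ S → (⇑φ.symm)^[l] t ∈ S → k = l)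
    (hclosed : ∀ i : ℕ, IsClosed (⋃ k : ℕ, ⋃ (_ : i ≤ k), (⇑φ)^[k] '' S))
    (hfix : ∀ x : ↥S, (x : T) ∈ S ∩ closure Sᶜ → h x = x) :
    Continuous (Fmap φ S h) := by
  set C : Set T := ⋃ k : ℕ, (⇑φ)^[k] '' S with hC
  have himg : ∀ k : ℕ, IsClosed ((⇑φ)^[k] '' S) := by
    intro k
    rw [← iterH_coe]
    exact ((iterH φ k).isClosedMap S hS)
  have hCclosed : IsClosed C := by
    have : C = ⋃ k : ℕ, ⋃ (_ : 0 ≤ k), (⇑φ)^[k] '' S := by simp [hC]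
    rw [this]; exact hclosed 0
  set f : Option ℕ → Set T := fun o => o.elim (closure Cᶜ) (fun k => (⇑φ)^[k] '' S) with hf
  have hsub : ∀ k : ℕ, (⇑φ)^[k] '' S ⊆ C := fun k => subset_iUnion (fun k => (⇑φ)^[k] '' S) k
  have hlf : LocallyFinite f := by
    intro t
    by_cases htC : t ∈ C
    · obtain ⟨k, hk⟩ : ∃ k : ℕ, t ∈ (⇑φ)^[k] '' S := mem_iUnion.1 htC
      refine ⟨(⋃ j : ℕ, ⋃ (_ : k + 1 ≤ j), (⇑φ)^[j] '' S)ᶜ, ?_, ?_⟩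
      · apply (hclosed (k + 1)).isOpen_compl.mem_nhds
        intro htin
        obtain ⟨j, hj, hjt⟩ : ∃ j : ℕ, k + 1 ≤ j ∧ t ∈ (⇑φ)^[j] '' S := by
          simpa using htin
        have := huniq t k j ((mem_iter_image_iff φ S k t).1 hk)
          ((mem_iter_image_iff φ S j t).1 hjt)
        omega
      · apply Set.Finite.subset (Set.Finite.insert none ((Set.finite_Iic k).image Option.some))
        rintro (_ | j) ⟨y, hy1, hy2⟩
        · exact mem_insert _ _
        · refine mem_insert_of_mem _ ⟨j, ?_, rfl⟩
          rw [Set.mem_Iic]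
          by_contra hjk
          exact hy2 (mem_iUnion.2 ⟨j, mem_iUnion.2 ⟨by omega, hy1⟩⟩)
    · refine ⟨Cᶜ, hCclosed.isOpen_compl.mem_nhds htC, ?_⟩
      apply Set.Finite.subset (Set.finite_singleton (none : Option ℕ))
      rintro (_ | j) ⟨y, hy1, hy2⟩
      · exact mem_singleton _
      · exact absurd (hsub j hy1) hy2
  apply hlf.continuous
  · ext t
    simp only [mem_iUnion, mem_univ, iff_true]
    by_cases htC : t ∈ C
    · obtain ⟨k, hk⟩ := mem_iUnion.1 htC
      exact ⟨some k, hk⟩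
    · exact ⟨none, subset_closure htC⟩
  · rintro (_ | k)
    · exact isClosed_closure
    · exact himg k
  · rintro (_ | k)
    · -- on `closure Cᶜ` the map is the identity
      apply ContinuousOn.congr continuousOn_id
      intro t ht
      by_cases hex : ∃ k : ℕ, (⇑φ.symm)^[k] t ∈ S
      · obtain ⟨k, hk⟩ := hex
        rw [Fmap_apply φ S h huniq k t hk]
        have hbd : (⇑φ.symm)^[k] t ∈ closure Sᶜ := by
          have h1 : Cᶜ ⊆ ((iterH φ k) '' S)ᶜ := by
            rw [iterH_coe]; exact compl_subset_compl.2 (hsub k)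
          have h2 : t ∈ closure (((iterH φ k)) '' Sᶜ) := by
            rw [Homeomorph.image_compl]
            exact closure_mono h1 ht
          rw [← Homeomorph.image_closure] at h2
          obtain ⟨x, hx, hxt⟩ := h2
          have : (⇑φ.symm)^[k] t = x := by
            rw [← hxt, ← iterH_symm_coe]
            exact (iterH φ k).symm_apply_apply x
          rwa [this]
        rw [hfix ⟨(⇑φ.symm)^[k] t, hk⟩ ⟨hk, hbd⟩]
        exact iter_left_inv φ k t
      · exact Fmap_apply_of_not φ S h t hex
    · -- on `φᵏ(S)` the map is `φᵏ ∘ h ∘ φ⁻ᵏ`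
      show ContinuousOn (Fmap φ S h) ((⇑φ)^[k] '' S)
      rw [continuousOn_iff_continuous_restrict]
      have key : ∀ p : ↥((⇑φ)^[k] '' S),
          ((⇑φ)^[k] '' S).domRestrict (Fmap φ S h) p =
          (⇑φ)^[k] ((h ⟨(⇑φ.symm)^[k] (p : T),
            (mem_iter_image_iff φ S k (p : T)).1 p.2⟩ : ↥S) : T) := by
        intro p
        exact Fmap_apply φ S h huniq k (p : T) _
      rw [funext key]
      have c1 : Continuous ((⇑φ)^[k]) := by
        rw [← iterH_coe]; exact (iterH φ k).continuous
      have c2 : Continuous ((⇑φ.symm)^[k]) := by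
        rw [← iterH_symm_coe]; exact (iterH φ k).symm.continuous
      exact c1.comp (continuous_subtype_val.comp (h.continuous.comp
        (Continuous.subtype_mk (c2.comp continuous_subtype_val) _)))

end Aux

/-- **Infinite iteration lemma** (Lemma 2.3 of the paper).
Let `B, S` be disjoint closed subsets of a topological space `T` and let `φ` be a
homeomorphism of `T` restricting to the identity on `B` such that `φᵏ(S) ∩ S = ∅` for all
`k ≥ 1` and `⋃_{k ≥ i} φᵏ(S)` is closed for all `i ≥ 0`.  Then the sets `φᵏ(S)`, `k ≥ 0`,
are pairwise disjoint and, for any homeomorphism `h` of the subspace `S` restricting to the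
identity on `∂_T(S) = S ∩ closure (T \ S)`, the map `h^{φ^∞}` sending `t ∈ φᵏ(S)` to
`φᵏ(h(φ⁻ᵏ(t)))` and every other point to itself is a well-defined homeomorphism of `T`
restricting to the identity on `B`. -/
theorem stmt1 {T : Type*} [TopologicalSpace T] (B S : Set T)
    (hB : IsClosed B) (hS : IsClosed S) (hBS : B ∩ S = ∅)
    (φ : T ≃ₜ T) (hφB : ∀ x ∈ B, φ x = x)
    (hdisj : ∀ k : ℕ, 1 ≤ k → (⇑φ)^[k] '' S ∩ S = ∅)
    (hclosed : ∀ i : ℕ, IsClosed (⋃ k : ℕ, ⋃ (_ : i ≤ k), (⇑φ)^[k] '' S))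
    (h : ↥S ≃ₜ ↥S) (hfix : ∀ x : ↥S, (x : T) ∈ S ∩ closure Sᶜ → h x = x) :
    (∀ k l : ℕ, k ≠ l → Disjoint ((⇑φ)^[k] '' S) ((⇑φ)^[l] '' S)) ∧
    ∃ H : T ≃ₜ T,
      (∀ x ∈ B, H x = x) ∧
      (∀ (k : ℕ) (x : T) (hx : x ∈ S), H ((⇑φ)^[k] x) = (⇑φ)^[k] ((h ⟨x, hx⟩ : ↥S) : T)) ∧
      (∀ t : T, t ∉ ⋃ k : ℕ, (⇑φ)^[k] '' S → H t = t) := by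
  -- uniqueness of the index k
  have key : ∀ (t : T) (k l : ℕ), k < l → (⇑φ.symm)^[k] t ∈ S → (⇑φ.symm)^[l] t ∈ S → False := by
    intro t k l hkl h1 h2
    have e1 : (⇑φ.symm)^[l] t = (⇑φ.symm)^[l - k] ((⇑φ.symm)^[k] t) := by
      rw [← Function.iterate_add_apply]
      congr 1
      omega
    have e2 : (⇑φ.symm)^[k] t = (⇑φ)^[l - k] ((⇑φ.symm)^[l] t) := by
      rw [e1, iter_left_inv]
    have hmem : (⇑φ.symm)^[k] t ∈ (⇑φ)^[l - k] '' S ∩ S := ⟨⟨_, h2, e2.symm⟩, h1⟩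
    rw [hdisj (l - k) (by omega)] at hmem
    exact hmem
  have huniq : ∀ (t : T) (k l : ℕ), (⇑φ.symm)^[k] t ∈ S → (⇑φ.symm)^[l] t ∈ S → k = l := by
    intro t k l h1 h2
    rcases lt_trichotomy k l with hlt | heq | hgt
    · exact absurd (key t k l hlt h1 h2) (not_false)
    · exact heq
    · exact absurd (key t l k hgt h2 h1) (not_false)
  have hdisj' : ∀ k l : ℕ, k ≠ l → Disjoint ((⇑φ)^[k] '' S) ((⇑φ)^[l] '' S) := by
    intro k l hkl
    rw [Set.disjoint_left]
    intro t ht1 ht2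
    exact hkl (huniq t k l ((mem_iter_image_iff φ S k t).1 ht1)
      ((mem_iter_image_iff φ S l t).1 ht2))
  refine ⟨hdisj', ?_⟩
  have hfix' : ∀ x : ↥S, (x : T) ∈ S ∩ closure Sᶜ → h.symm x = x := by
    intro x hx
    conv_lhs => rw [← hfix x hx]
    exact h.symm_apply_apply x
  refine ⟨⟨⟨Fmap φ S h, Fmap φ S h.symm, fun t => Fmap_inv φ S h huniq t, fun t => ?_⟩,
      Fmap_continuous φ S hS h huniq hclosed hfix,
      Fmap_continuous φ S hS h.symm huniq hclosed hfix'⟩, ?_, ?_, ?_⟩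
  · have := Fmap_inv φ S h.symm huniq t
    rwa [Homeomorph.symm_symm] at this
  · -- identity on B
    intro x hx
    have hBsymm : (⇑φ.symm) x = x := by
      conv_lhs => rw [← hφB x hx]
      exact φ.symm_apply_apply x
    have hiter : ∀ k : ℕ, (⇑φ.symm)^[k] x = x := by
      intro k
      induction k with
      | zero => rfl
      | succ n ih => rw [Function.iterate_succ_apply', ih, hBsymm]
    show Fmap φ S h x = x
    apply Fmap_apply_of_not
    rintro ⟨k, hk⟩
    rw [hiter k] at hk
    have : x ∈ B ∩ S := ⟨hx, hk⟩
    rw [hBS] at this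
    exact this
  · -- the defining property
    intro k x hx
    have ht : (⇑φ.symm)^[k] ((⇑φ)^[k] x) ∈ S := by rw [iter_right_inv]; exact hx
    show Fmap φ S h ((⇑φ)^[k] x) = _
    rw [Fmap_apply φ S h huniq k _ ht]
    have heq : (⟨(⇑φ.symm)^[k] ((⇑φ)^[k] x), ht⟩ : ↥S) = ⟨x, hx⟩ :=
      Subtype.ext (iter_right_inv φ k x)
    rw [heq]
  · -- identity outside the union
    intro t ht
    show Fmap φ S h t = t
    apply Fmap_apply_of_not
    rintro ⟨k, hk⟩
    exact ht (mem_iUnion.2 ⟨k, (mem_iter_image_iff φ S k t).2 hk⟩)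
end

section
/- Let T be a topological space, S ⊆ T a closed subset, and φ : T → T a homeomorphism such that φ^k(S) ∩ S = ∅ for every integer k ≥ 1 and such that ⋃_{k≥i} φ^k(S) is a closed subset of T for every integer i ≥ 0. Then for every subset N ⊆ ℕ, the union ⋃_{k∈N} φ^k(S) is a closed subset of T. -/
/-- If `S` is a closed subset of `T` and `φ` is a homeomorphism of `T` with `φᵏ(S) ∩ S = ∅`
for all `k ≥ 1` and `⋃_{k ≥ i} φᵏ(S)` closed for all `i ≥ 0`, then `⋃_{k ∈ N} φᵏ(S)` is
closed for every subset `N ⊆ ℕ`. -/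
theorem stmt2 {T : Type*} [TopologicalSpace T] (S : Set T) (hS : IsClosed S)
    (φ : T ≃ₜ T)
    (hdisj : ∀ k : ℕ, 1 ≤ k → (⇑φ)^[k] '' S ∩ S = ∅)
    (hclosed : ∀ i : ℕ, IsClosed (⋃ k : ℕ, ⋃ (_ : i ≤ k), (⇑φ)^[k] '' S)) :
    ∀ N : Set ℕ, IsClosed (⋃ k ∈ N, (⇑φ)^[k] '' S) := by
  intro N
  -- each iterate image is closed
  have hcl : ∀ k : ℕ, IsClosed ((⇑φ)^[k] '' S) := by
    intro k
    induction k with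
    | zero => simpa using hS
    | succ n ih =>
      rw [Function.iterate_succ', Set.image_comp]
      exact φ.isClosedMap _ ih
  -- pairwise disjointness
  have hpd : ∀ m n : ℕ, m < n → ∀ x, x ∈ (⇑φ)^[m] '' S → x ∉ (⇑φ)^[n] '' S := by
    intro m n hmn x hxm hxn
    obtain ⟨a, ha, hax⟩ := hxm
    obtain ⟨b, hb, hbx⟩ := hxn
    have hninj : Function.Injective ((⇑φ)^[m]) :=
      Function.Injective.iterate φ.injective m
    have hsplit : (⇑φ)^[n] b = (⇑φ)^[m] ((⇑φ)^[n - m] b) := by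
      rw [← Function.iterate_add_apply]
      congr 1
      omega
    have hab : a = (⇑φ)^[n - m] b := by
      apply hninj
      rw [hax, ← hbx, hsplit]
    have : a ∈ (⇑φ)^[n - m] '' S ∩ S := ⟨hab ▸ ⟨b, hb, rfl⟩, ha⟩
    rw [hdisj (n - m) (by omega)] at this
    exact this
  refine isClosed_of_closure_subset ?_
  intro x hx
  -- x is in the closed superset ⋃_{k ≥ 0}
  have hx0 : x ∈ ⋃ k : ℕ, ⋃ (_ : 0 ≤ k), (⇑φ)^[k] '' S := by
    apply closure_minimal ?_ (hclosed 0) hx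
    intro y hy
    simp only [Set.mem_iUnion] at hy ⊢
    obtain ⟨k, _, hk⟩ := hy
    exact ⟨k, Nat.zero_le k, hk⟩
  simp only [Set.mem_iUnion] at hx0
  obtain ⟨m, -, hxm⟩ := hx0
  -- open neighborhood avoiding all (⇑φ)^[k] '' S for k ≠ m
  set U : Set T := (⋃ k : ℕ, ⋃ (_ : m + 1 ≤ k), (⇑φ)^[k] '' S)ᶜ ∩
      ⋂ k ∈ Finset.range m, ((⇑φ)^[k] '' S)ᶜ with hU
  have hUopen : IsOpen U := by
    apply IsOpen.inter (hclosed (m + 1)).isOpen_compl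
    exact isOpen_biInter_finset fun k _ => (hcl k).isOpen_compl
  have hxU : x ∈ U := by
    constructor
    · simp only [Set.mem_compl_iff, Set.mem_iUnion, not_exists]
      rintro k hk hxk
      exact hpd m k (by omega) x hxm hxk
    · simp only [Set.mem_iInter, Set.mem_compl_iff, Finset.mem_range]
      intro k hk hxk
      exact hpd k m hk x hxk hxm
  -- U meets the union over N
  obtain ⟨y, hyU, hy⟩ := mem_closure_iff.mp hx U hUopen hxU
  simp only [Set.mem_iUnion] at hy
  obtain ⟨n, hnN, hyn⟩ := hy
  have hnm : n = m := by
    by_contra hne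
    rcases lt_or_gt_of_ne hne with h | h
    · have := hyU.2
      simp only [Set.mem_iInter, Set.mem_compl_iff, Finset.mem_range] at this
      exact this n h hyn
    · exact hyU.1 (Set.mem_iUnion.mpr ⟨n, Set.mem_iUnion.mpr ⟨by omega, hyn⟩⟩)
  subst hnm
  exact Set.mem_iUnion.mpr ⟨n, Set.mem_iUnion.mpr ⟨hnN, hxm⟩⟩
end

section
/- Let T be a topological space, B, S ⊆ T closed subsets with B ∩ S = ∅, ∂_T(S) = S ∩ closure(T ∖ S), and let φ : T → T be a homeomorphism restricting to the identity on B such that φ^k(S) ∩ S = ∅ for all k ≥ 1 and ⋃_{k≥i} φ^k(S) is closed in T for all i ≥ 0. For a homeomorphism h of S restricting to the identity on ∂_T(S), let ĥ denote the homeomorphism of T extending h by the identity on T ∖ S. Then (a) h^{φ^∞} = ĥ ∘ (φ ∘ h^{φ^∞} ∘ φ^{-1}), and (b) for any two homeomorphisms h₁, h₂ of S restricting to the identity on ∂_T(S), the homeomorphisms ĥ₁ and φ ∘ h₂^{φ^∞} ∘ φ^{-1} of T commute. -/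
/-- In the setting of the infinite iteration lemma, for homeomorphisms `h₁, h₂` of the
subspace `S` fixing `∂_T(S) = S ∩ closure (T \ S)` pointwise, let `ĥ₁` denote the extension
of `h₁` by the identity on `T \ S`, and let `h₁^{φ^∞}, h₂^{φ^∞}` denote the infinite
iterates (equal to `φᵏ ∘ hᵢ ∘ φ⁻ᵏ` on `φᵏ(S)` for `k ≥ 0`, and the identity elsewhere).
Then (a) `h₁^{φ^∞} = ĥ₁ ∘ (φ ∘ h₁^{φ^∞} ∘ φ⁻¹)` and (b) `ĥ₁` commutes with
`φ ∘ h₂^{φ^∞} ∘ φ⁻¹`. -/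
theorem stmt4 {T : Type*} [TopologicalSpace T] (B S : Set T)
    (hB : IsClosed B) (hS : IsClosed S) (hBS : B ∩ S = ∅)
    (φ : T ≃ₜ T) (hφB : ∀ x ∈ B, φ x = x)
    (hdisj : ∀ k : ℕ, 1 ≤ k → (⇑φ)^[k] '' S ∩ S = ∅)
    (hclosed : ∀ i : ℕ, IsClosed (⋃ k : ℕ, ⋃ (_ : i ≤ k), (⇑φ)^[k] '' S))
    (h₁ h₂ : ↥S ≃ₜ ↥S)
    (hfix₁ : ∀ x : ↥S, (x : T) ∈ S ∩ closure Sᶜ → h₁ x = x)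
    (hfix₂ : ∀ x : ↥S, (x : T) ∈ S ∩ closure Sᶜ → h₂ x = x)
    -- `E₁ = ĥ₁`, the extension of `h₁` by the identity on `T \ S`
    (E₁ : T ≃ₜ T)
    (hE₁S : ∀ (x : T) (hx : x ∈ S), E₁ x = ((h₁ ⟨x, hx⟩ : ↥S) : T))
    (hE₁c : ∀ t : T, t ∉ S → E₁ t = t)
    -- `Ψ₁ = h₁^{φ^∞}` and `Ψ₂ = h₂^{φ^∞}`
    (Ψ₁ Ψ₂ : T ≃ₜ T)
    (hΨ₁S : ∀ (k : ℕ) (x : T) (hx : x ∈ S),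
      Ψ₁ ((⇑φ)^[k] x) = (⇑φ)^[k] ((h₁ ⟨x, hx⟩ : ↥S) : T))
    (hΨ₁c : ∀ t : T, t ∉ ⋃ k : ℕ, (⇑φ)^[k] '' S → Ψ₁ t = t)
    (hΨ₂S : ∀ (k : ℕ) (x : T) (hx : x ∈ S),
      Ψ₂ ((⇑φ)^[k] x) = (⇑φ)^[k] ((h₂ ⟨x, hx⟩ : ↥S) : T))
    (hΨ₂c : ∀ t : T, t ∉ ⋃ k : ℕ, (⇑φ)^[k] '' S → Ψ₂ t = t) :
    -- (a) `h₁^{φ^∞} = ĥ₁ ∘ (φ ∘ h₁^{φ^∞} ∘ φ⁻¹)`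
    (∀ t : T, Ψ₁ t = E₁ (φ (Ψ₁ (φ.symm t)))) ∧
    -- (b) `ĥ₁` and `φ ∘ h₂^{φ^∞} ∘ φ⁻¹` commute
    (∀ t : T, E₁ (φ (Ψ₂ (φ.symm t))) = φ (Ψ₂ (φ.symm (E₁ t)))) := by

  -- `U` is the union of the forward iterates of `S`.
  set U : Set T := ⋃ k : ℕ, (⇑φ)^[k] '' S with hU
  -- preimage under φ of a point of S is not in U
  have hpre : ∀ x : T, x ∈ S → φ.symm x ∉ U := by
    intro x hx hmem
    rcases Set.mem_iUnion.1 hmem with ⟨j, y, hy, hyx⟩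
    have : x = (⇑φ)^[j+1] y := by
      rw [Function.iterate_succ_apply', hyx]
      simp
    have : x ∈ (⇑φ)^[j+1] '' S ∩ S := ⟨⟨y, hy, this.symm⟩, hx⟩
    rw [hdisj (j+1) (by omega)] at this
    exact this
  -- φ.symm of a point not in U is not in U
  have hpre' : ∀ t : T, t ∉ U → φ.symm t ∉ U := by
    intro t ht hmem
    rcases Set.mem_iUnion.1 hmem with ⟨j, y, hy, hyx⟩
    apply ht
    refine Set.mem_iUnion.2 ⟨j+1, y, hy, ?_⟩
    rw [Function.iterate_succ_apply', hyx]
    simp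
  -- iterates of points of S for k ≥ 1 are not in S
  have hiter : ∀ (m : ℕ) (z : T), z ∈ S → (⇑φ)^[m+1] z ∉ S := by
    intro m z hz hmem
    have : (⇑φ)^[m+1] z ∈ (⇑φ)^[m+1] '' S ∩ S := ⟨⟨z, hz, rfl⟩, hmem⟩
    rw [hdisj (m+1) (by omega)] at this
    exact this
  constructor
  · intro t
    by_cases ht : t ∈ U
    · rcases Set.mem_iUnion.1 ht with ⟨k, x, hx, rfl⟩
      cases k with
      | zero =>
        simp only [Function.iterate_zero_apply]
        rw [hΨ₁c _ (hpre x hx), Homeomorph.apply_symm_apply, hE₁S x hx]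
        simpa using hΨ₁S 0 x hx
      | succ m =>
        have hsymm : φ.symm ((⇑φ)^[m+1] x) = (⇑φ)^[m] x := by
          rw [Function.iterate_succ_apply']; simp
        rw [hsymm, hΨ₁S m x hx, hΨ₁S (m+1) x hx,
          ← Function.iterate_succ_apply' (⇑φ) m,
          hE₁c _ (hiter m _ (h₁ ⟨x, hx⟩).2)]
    · rw [hΨ₁c t ht, hΨ₁c _ (hpre' t ht), Homeomorph.apply_symm_apply,
        hE₁c t (fun h => ht (Set.mem_iUnion.2 ⟨0, t, h, rfl⟩))]
  · intro t
    by_cases ht : t ∈ U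
    · rcases Set.mem_iUnion.1 ht with ⟨k, x, hx, rfl⟩
      cases k with
      | zero =>
        simp only [Function.iterate_zero_apply]
        rw [hΨ₂c _ (hpre x hx), Homeomorph.apply_symm_apply, hE₁S x hx,
          hΨ₂c _ (hpre _ (h₁ ⟨x, hx⟩).2), Homeomorph.apply_symm_apply]
      | succ m =>
        have htS : (⇑φ)^[m+1] x ∉ S := hiter m x hx
        have hsymm : φ.symm ((⇑φ)^[m+1] x) = (⇑φ)^[m] x := by
          rw [Function.iterate_succ_apply']; simp
        rw [hE₁c _ htS, hsymm, hΨ₂S m x hx,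
          ← Function.iterate_succ_apply' (⇑φ) m,
          hE₁c _ (hiter m _ (h₂ ⟨x, hx⟩).2)]
    · have htS : t ∉ S := fun h => ht (Set.mem_iUnion.2 ⟨0, t, h, rfl⟩)
      rw [hE₁c t htS, hΨ₂c _ (hpre' t ht), Homeomorph.apply_symm_apply,
        hE₁c t htS]
end

section
/- Let C = (ℕ → Bool) be the Cantor space with the product topology (Bool discrete), and consider the one-point compactification OnePoint(ℕ × C) of the disjoint union of countably infinitely many copies of C (ℕ discrete). Then any two points of OnePoint(ℕ × C) are similar; in particular, no point of OnePoint(ℕ × C) is topologically distinguished. In particular, the point at infinity of OnePoint(ℕ × C) is not topologically distinguished. -/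
/-- Two points `x, y` of a topological space are *similar* if there are open neighbourhoods
`U ∋ x` and `V ∋ y` and a homeomorphism `U ≅ V` (subspace topologies) taking `x` to `y`. -/
def TopSimilar {E : Type*} [TopologicalSpace E] (x y : E) : Prop :=
  ∃ (U V : Set E) (hU : IsOpen U) (hV : IsOpen V) (hx : x ∈ U) (hy : y ∈ V)
    (φ : ↥U ≃ₜ ↥V), φ ⟨x, hx⟩ = ⟨y, hy⟩

/-- A point is *topologically distinguished* if it is similar only to itself. -/
def TopologicallyDistinguished {E : Type*} [TopologicalSpace E] (x : E) : Prop :=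
  ∀ y : E, TopSimilar x y → y = x


open Filter Topology

def fnn (n : ℕ) (s : ℕ → Bool) : ℕ → Bool :=
  fun k => if k ≤ n then decide (k < n) else s (k - n - 1)

lemma fnn_cont (n : ℕ) : Continuous (fnn n) := by
  apply continuous_pi; intro k
  by_cases h : k ≤ n
  · simpa [fnn, h] using continuous_const
  · simpa [fnn, h] using continuous_apply (k - n - 1)

noncomputable def Ffun : OnePoint (ℕ × (ℕ → Bool)) → (ℕ → Bool) :=
  fun x => Option.elim x (fun _ => true) (fun p => fnn p.1 p.2)

open Classical in
noncomputable def Gfun : (ℕ → Bool) → OnePoint (ℕ × (ℕ → Bool)) :=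
  fun t => if h : ∃ k, t k = false then
    OnePoint.some (Nat.find h, fun k => t (Nat.find h + 1 + k)) else OnePoint.infty

lemma FG : Function.RightInverse Gfun Ffun := by
  intro t
  unfold Gfun
  split_ifs with h
  · set n := Nat.find h with hn
    have hspec : t n = false := Nat.find_spec h
    funext k
    show fnn n (fun k => t (n+1+k)) k = t k
    rcases lt_trichotomy k n with hk | hk | hk
    · have := Nat.find_min h hk
      simp only [fnn, if_pos hk.le, decide_eq_true_eq]
      cases hb : t k
      · exact absurd hb this
      · simpa using hk
    · subst hk; simp [fnn, hspec]
    · have h1 : ¬ k ≤ n := by omega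
      simp only [fnn, if_neg h1]
      congr 1; omega
  · push_neg at h
    funext k
    have := h k
    show true = t k
    cases hb : t k
    · exact absurd hb (h k)
    · rfl

lemma GF : Function.LeftInverse Gfun Ffun := by
  intro x
  cases x using OnePoint.rec with
  | infty =>
      show Gfun (fun _ => true) = OnePoint.infty
      unfold Gfun
      rw [dif_neg (by rintro ⟨k, hk⟩; simp at hk)]
  | coe p =>
      obtain ⟨n, s⟩ := p
      show Gfun (fnn n s) = OnePoint.some (n, s)
      unfold Gfun
      have h : ∃ k, fnn n s k = false := ⟨n, by simp [fnn]⟩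
      rw [dif_pos h]
      have hfind : Nat.find h = n := by
        rw [Nat.find_eq_iff]
        refine ⟨by simp [fnn], fun k hk => ?_⟩
        simp [fnn, hk, Nat.le_of_lt hk]
      congr 1
      refine Prod.ext hfind ?_
      funext k
      rw [hfind]
      have h1 : ¬ (n + 1 + k ≤ n) := by omega
      simp only [fnn, if_neg h1]
      congr 1; omega

lemma contF : Continuous Ffun := by
  rw [OnePoint.continuous_iff]
  constructor
  · rw [tendsto_pi_nhds]
    intro i
    have : 𝓝 (Ffun OnePoint.infty i) = pure true := by
      show 𝓝 true = pure true
      simp [nhds_discrete]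
    rw [this, tendsto_pure]
    rw [hasBasis_coclosedCompact.eventually_iff]
    refine ⟨(Set.Iic i) ×ˢ Set.univ, ⟨(Set.finite_Iic i).isClosed.prod isClosed_univ,
      ((Set.finite_Iic i).isCompact).prod isCompact_univ⟩, ?_⟩
    rintro ⟨n, s⟩ hp
    have hn : i < n := by
      by_contra hc
      exact hp ⟨by simpa using Nat.le_of_not_lt hc, Set.mem_univ _⟩
    show fnn n s i = true
    simp [fnn, hn.le, hn]
  · rw [continuous_iff_continuousAt]
    rintro ⟨n, s⟩
    have hmem : {p : ℕ × (ℕ → Bool) | p.1 = n} ∈ 𝓝 (n, s) := by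
      have ho : IsOpen {p : ℕ × (ℕ → Bool) | p.1 = n} :=
        (isOpen_discrete ({n} : Set ℕ)).preimage continuous_fst
      exact ho.mem_nhds rfl
    refine ContinuousAt.congr (((fnn_cont n).comp continuous_snd).continuousAt) ?_
    filter_upwards [hmem] with p hp
    show fnn n p.2 = Ffun (OnePoint.some p)
    rw [show Ffun (OnePoint.some p) = fnn p.1 p.2 from rfl, hp]

noncomputable def eqF : OnePoint (ℕ × (ℕ → Bool)) ≃ (ℕ → Bool) := ⟨Ffun, Gfun, GF, FG⟩

noncomputable def eHomeo : OnePoint (ℕ × (ℕ → Bool)) ≃ₜ (ℕ → Bool) :=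
  Continuous.homeoOfEquivCompactToT2 (f := eqF) contF

def xorH (c : ℕ → Bool) : (ℕ → Bool) ≃ₜ (ℕ → Bool) where
  toFun t := fun k => xor (t k) (c k)
  invFun t := fun k => xor (t k) (c k)
  left_inv t := by funext k; simp
  right_inv t := by funext k; simp
  continuous_toFun := continuous_pi fun k =>
    (continuous_of_discreteTopology (f := fun b => xor b (c k))).comp (continuous_apply k)
  continuous_invFun := continuous_pi fun k =>
    (continuous_of_discreteTopology (f := fun b => xor b (c k))).comp (continuous_apply k)



lemma similar_any (x y : OnePoint (ℕ × (ℕ → Bool))) : TopSimilar x y := by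
  set c : ℕ → Bool := fun k => xor (eHomeo x k) (eHomeo y k) with hc
  set h : OnePoint (ℕ × (ℕ → Bool)) ≃ₜ OnePoint (ℕ × (ℕ → Bool)) :=
    eHomeo.trans ((xorH c).trans eHomeo.symm) with hh
  have hxy : h x = y := by
    have key : (xorH c) (eHomeo x) = eHomeo y := by
      funext k; simp [xorH, hc, Bool.xor_comm]
    simp [hh, Homeomorph.trans_apply, key]
  refine ⟨Set.univ, Set.univ, isOpen_univ, isOpen_univ, trivial, trivial,
    (Homeomorph.Set.univ _).trans (h.trans (Homeomorph.Set.univ _).symm), ?_⟩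
  apply Subtype.ext
  simp [hxy]

/-- In the one-point compactification `(Cω)⁺` of countably many copies of the Cantor space
`C = ℕ → Bool`, any two points are similar; in particular no point — and in particular not
the point at infinity — is topologically distinguished. -/
theorem stmt9 :
    (∀ x y : OnePoint (ℕ × (ℕ → Bool)), TopSimilar x y) ∧
    (∀ x : OnePoint (ℕ × (ℕ → Bool)), ¬ TopologicallyDistinguished x) ∧
    ¬ TopologicallyDistinguished (OnePoint.infty : OnePoint (ℕ × (ℕ → Bool))) := by
  have h2 : ∀ x : OnePoint (ℕ × (ℕ → Bool)), ¬ TopologicallyDistinguished x := by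
    intro x hx
    obtain ⟨y, hy⟩ := exists_ne x
    exact hy (hx y (similar_any x y))
  exact ⟨similar_any, h2, h2 _⟩
end

section
/- Let C = (ℕ → Bool) be the Cantor space with the product topology (Bool discrete). Then the one-point compactification OnePoint(ℕ × C) of the disjoint union of countably infinitely many copies of C (ℕ discrete) is homeomorphic to C, i.e. (Cω)⁺ ≅ C. -/
private def g10 : ℕ × (ℕ → Bool) → ℕ → Bool := fun p k =>
  if k < p.1 then false else if k = p.1 then true else p.2 (k - p.1 - 1)

private def f10 : OnePoint (ℕ × (ℕ → Bool)) → ℕ → Bool :=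
  fun o => Option.elim o (fun _ => false) g10

private lemma g10_self (p : ℕ × (ℕ → Bool)) : g10 p p.1 = true := by
  simp [g10]

private lemma g10_lt {p : ℕ × (ℕ → Bool)} {k : ℕ} (h : k < p.1) : g10 p k = false := by
  simp [g10, h]

private lemma g10_gt (p : ℕ × (ℕ → Bool)) (j : ℕ) : g10 p (p.1 + 1 + j) = p.2 j := by
  have h1 : ¬ (p.1 + 1 + j < p.1) := by omega
  have h2 : ¬ (p.1 + 1 + j = p.1) := by omega
  have h3 : p.1 + 1 + j - p.1 - 1 = j := by omega
  simp [g10, h1, h2, h3]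

private lemma g10_inj : Function.Injective g10 := by
  rintro ⟨n, x⟩ ⟨m, y⟩ h
  have hnm : n = m := by
    by_contra hne
    rcases Nat.lt_or_ge n m with hlt | hge
    · have h1 : g10 (n, x) n = true := g10_self _
      have h2 : g10 (m, y) n = false := g10_lt hlt
      rw [h] at h1; rw [h1] at h2; exact Bool.noConfusion h2
    · have hlt : m < n := lt_of_le_of_ne hge (Ne.symm hne)
      have h1 : g10 (m, y) m = true := g10_self _
      have h2 : g10 (n, x) m = false := g10_lt hlt
      rw [← h] at h1; rw [h1] at h2; exact Bool.noConfusion h2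
  subst hnm
  have : x = y := by
    funext j
    have := congrFun h (n + 1 + j)
    rwa [g10_gt (n, x) j, g10_gt (n, y) j] at this
  rw [this]

private lemma f10_bij : Function.Bijective f10 := by
  constructor
  · rintro (_ | p) (_ | q) h
    · rfl
    · exfalso
      have := congrFun h q.1
      rw [show f10 Option.none = fun _ => false from rfl] at this
      rw [show f10 (Option.some q) = g10 q from rfl, g10_self] at this
      exact Bool.noConfusion this
    · exfalso
      have := congrFun h p.1
      rw [show f10 Option.none = fun _ => false from rfl] at this
      rw [show f10 (Option.some p) = g10 p from rfl, g10_self] at this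
      exact Bool.noConfusion this
    · have : g10 p = g10 q := h
      rw [g10_inj this]
  · intro s
    by_cases hs : ∀ k, s k = false
    · exact ⟨Option.none, (funext hs).symm⟩
    · push_neg at hs
      have hs' : ∃ k, s k = true := by
        obtain ⟨k, hk⟩ := hs
        exact ⟨k, by revert hk; cases s k <;> simp⟩
      set n := Nat.find hs' with hn
      refine ⟨Option.some (n, fun j => s (n + 1 + j)), ?_⟩
      show g10 (n, fun j => s (n + 1 + j)) = s
      funext k
      rcases lt_trichotomy k n with h | h | h
      · rw [g10_lt h]
        have := Nat.find_min hs' h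
        revert this; cases s k <;> simp
      · subst h
        rw [g10_self (n, fun j => s (n + 1 + j))]
        exact (Nat.find_spec hs').symm
      · have hk : k = n + 1 + (k - n - 1) := by omega
        rw [hk, g10_gt]

private lemma g10_cont : Continuous g10 := by
  refine continuous_pi fun k => ?_
  rw [continuous_iff_continuousAt]
  rintro ⟨n, x⟩
  have hev : ∀ᶠ p : ℕ × (ℕ → Bool) in nhds (n, x), p.1 = n := by
    have : IsOpen {p : ℕ × (ℕ → Bool) | p.1 = n} :=
      (isOpen_discrete {n}).preimage continuous_fst
    exact this.mem_nhds rfl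
  have hc : Continuous (fun p : ℕ × (ℕ → Bool) =>
      if k < n then false else if k = n then true else p.2 (k - n - 1)) := by
    by_cases h1 : k < n
    · simpa [h1] using (continuous_const : Continuous fun _ : ℕ × (ℕ → Bool) => false)
    · by_cases h2 : k = n
      · simpa [h1, h2] using (continuous_const : Continuous fun _ : ℕ × (ℕ → Bool) => true)
      · simpa [h1, h2, Function.comp_def] using (continuous_apply (k - n - 1)).comp
          (continuous_snd : Continuous fun p : ℕ × (ℕ → Bool) => p.2)
  refine hc.continuousAt.congr ?_
  filter_upwards [hev] with p hp
  simp [g10, hp]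

private lemma f10_cont : Continuous f10 := by
  rw [OnePoint.continuous_iff]
  constructor
  · show Filter.Tendsto g10 (Filter.coclosedCompact _) (nhds fun _ => false)
    rw [tendsto_pi_nhds]
    intro k
    rw [nhds_discrete, Filter.tendsto_pure]
    rw [Filter.eventually_iff]; simp only [Filter.hasBasis_coclosedCompact.mem_iff, and_assoc]
    refine ⟨Set.Iic k ×ˢ Set.univ, ?_, ?_, ?_⟩
    · exact (isClosed_discrete _).prod isClosed_univ
    · exact ((Set.finite_Iic k).isCompact).prod isCompact_univ
    · intro p hp
      simp only [Set.mem_compl_iff, Set.mem_prod, Set.mem_Iic, Set.mem_univ, and_true,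
        not_le] at hp
      exact g10_lt hp
  · exact g10_cont

/-- The one-point compactification `(Cω)⁺` of the disjoint union of countably infinitely
many copies of the Cantor space `C = ℕ → Bool` is homeomorphic to `C`. -/
theorem stmt10 : Nonempty (OnePoint (ℕ × (ℕ → Bool)) ≃ₜ (ℕ → Bool)) := by
  have hc : Continuous (Equiv.ofBijective f10 f10_bij) := f10_cont
  exact ⟨hc.homeoOfEquivCompactToT2⟩
end

section
/- (Classification of metrisable compactifications of ℕ.) Every non-empty compact metrisable space can be realised, uniquely up to homeomorphism of pairs, as the boundary of a metrisable compactification of the natural numbers with the discrete topology. Precisely: (existence) for every non-empty compact metrisable space X there exists a compact metrisable space Y together with a topological embedding f : ℕ → Y (ℕ discrete) with dense image such that Y ∖ f(ℕ) is homeomorphic to X; (uniqueness) if (Y, f) and (Y', f') are two such compactifications of ℕ whose boundaries Y ∖ f(ℕ) and Y' ∖ f'(ℕ) are homeomorphic, then there is a homeomorphism Y ≅ Y' carrying f(ℕ) onto f'(ℕ). -/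
open Topology TopologicalSpace Metric Set

set_option linter.unusedSectionVars false
set_option maxHeartbeats 1000000 in
section
namespace Stmt12Aux


section BF
variable (A B : ℕ → ℕ → Prop)

/-- Invariant for the back-and-forth construction. -/
def Inv (s : Finset (ℕ × ℕ)) : Prop :=
  (∀ p ∈ s, A p.1 p.2 ∨ B p.1 p.2) ∧ Set.InjOn Prod.fst (s : Set (ℕ × ℕ)) ∧
    Set.InjOn Prod.snd (s : Set (ℕ × ℕ))

variable (hA : ∀ k (F : Finset ℕ), ∃ m ∉ F, A k m) (hB : ∀ m (F : Finset ℕ), ∃ k ∉ F, B k m)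

include hA hB

noncomputable def step1 (s : Finset (ℕ × ℕ)) (n : ℕ) : Finset (ℕ × ℕ) :=
  @ite _ (∃ m, (n, m) ∈ s) (Classical.propDecidable _) s
    (insert (n, (hA n (s.image Prod.snd)).choose) s)

noncomputable def step2 (s : Finset (ℕ × ℕ)) (n : ℕ) : Finset (ℕ × ℕ) :=
  @ite _ (∃ k, (k, n) ∈ s) (Classical.propDecidable _) s
    (insert ((hB n (s.image Prod.fst)).choose, n) s)

noncomputable def step (s : Finset (ℕ × ℕ)) (n : ℕ) : Finset (ℕ × ℕ) :=
  step2 B hB (step1 A hA s n) n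

lemma subset_step1 (s : Finset (ℕ × ℕ)) (n : ℕ) : s ⊆ step1 A hA s n := by
  dsimp only [step1]; split_ifs
  · exact fun p hp => hp
  · exact fun p hp => Finset.mem_insert_of_mem hp

lemma subset_step2 (s : Finset (ℕ × ℕ)) (n : ℕ) : s ⊆ step2 B hB s n := by
  dsimp only [step2]; split_ifs
  · exact fun p hp => hp
  · exact fun p hp => Finset.mem_insert_of_mem hp

lemma subset_step (s : Finset (ℕ × ℕ)) (n : ℕ) : s ⊆ step A B hA hB s n :=
  (subset_step1 A B hA hB s n).trans (subset_step2 A B hA hB _ n)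

lemma mem_fst_step1 (s : Finset (ℕ × ℕ)) (n : ℕ) : ∃ m, (n, m) ∈ step1 A hA s n := by
  dsimp only [step1]; split_ifs with h1
  · exact h1
  · exact ⟨_, Finset.mem_insert_self _ _⟩

lemma mem_fst_step (s : Finset (ℕ × ℕ)) (n : ℕ) : ∃ m, (n, m) ∈ step A B hA hB s n := by
  obtain ⟨m, hm⟩ := mem_fst_step1 A B hA hB s n
  exact ⟨m, subset_step2 A B hA hB _ n hm⟩

lemma mem_snd_step (s : Finset (ℕ × ℕ)) (n : ℕ) : ∃ k, (k, n) ∈ step A B hA hB s n := by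
  dsimp only [step, step2]; split_ifs with h1
  · exact h1
  · exact ⟨_, Finset.mem_insert_self _ _⟩

lemma inv_insert_fst {s : Finset (ℕ × ℕ)} (hs : Inv A B s) {k m : ℕ}
    (hk : ¬∃ m', (k, m') ∈ s) (hm : m ∉ s.image Prod.snd) (hG : A k m ∨ B k m) :
    Inv A B (insert (k, m) s) := by
  obtain ⟨hgood, hfst, hsnd⟩ := hs
  refine ⟨?_, ?_, ?_⟩
  · intro p hp
    rcases Finset.mem_insert.1 hp with h | h
    · subst h; exact hG
    · exact hgood p h
  · intro x hx y hy hxy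
    simp only [Finset.coe_insert, Set.mem_insert_iff] at hx hy
    rcases hx with rfl | hx <;> rcases hy with rfl | hy
    · rfl
    · exact absurd ⟨y.2, (show ((k, y.2) : ℕ × ℕ) = y from Prod.ext hxy rfl) ▸ hy⟩ hk
    · exact absurd ⟨x.2, (show ((k, x.2) : ℕ × ℕ) = x from Prod.ext hxy.symm rfl) ▸ hx⟩ hk
    · exact hfst hx hy hxy
  · intro x hx y hy hxy
    simp only [Finset.coe_insert, Set.mem_insert_iff] at hx hy
    rcases hx with rfl | hx <;> rcases hy with rfl | hy
    · rfl
    · exact absurd (Finset.mem_image.2 ⟨y, hy, hxy.symm⟩) hm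
    · exact absurd (Finset.mem_image.2 ⟨x, hx, hxy⟩) hm
    · exact hsnd hx hy hxy

lemma inv_insert_snd {s : Finset (ℕ × ℕ)} (hs : Inv A B s) {k m : ℕ}
    (hm : ¬∃ k', (k', m) ∈ s) (hk : k ∉ s.image Prod.fst) (hG : A k m ∨ B k m) :
    Inv A B (insert (k, m) s) := by
  obtain ⟨hgood, hfst, hsnd⟩ := hs
  refine ⟨?_, ?_, ?_⟩
  · intro p hp
    rcases Finset.mem_insert.1 hp with h | h
    · subst h; exact hG
    · exact hgood p h
  · intro x hx y hy hxy
    simp only [Finset.coe_insert, Set.mem_insert_iff] at hx hy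
    rcases hx with rfl | hx <;> rcases hy with rfl | hy
    · rfl
    · exact absurd (Finset.mem_image.2 ⟨y, hy, hxy.symm⟩) hk
    · exact absurd (Finset.mem_image.2 ⟨x, hx, hxy⟩) hk
    · exact hfst hx hy hxy
  · intro x hx y hy hxy
    simp only [Finset.coe_insert, Set.mem_insert_iff] at hx hy
    rcases hx with rfl | hx <;> rcases hy with rfl | hy
    · rfl
    · exact absurd ⟨y.1, (show ((y.1, m) : ℕ × ℕ) = y from Prod.ext rfl hxy) ▸ hy⟩ hm
    · exact absurd ⟨x.1, (show ((x.1, m) : ℕ × ℕ) = x from Prod.ext rfl hxy.symm) ▸ hx⟩ hm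
    · exact hsnd hx hy hxy

lemma inv_step1 {s : Finset (ℕ × ℕ)} (hs : Inv A B s) (n : ℕ) :
    Inv A B (step1 A hA s n) := by
  dsimp only [step1]; split_ifs with h1
  · exact hs
  · exact inv_insert_fst A B hA hB hs h1 (hA n (s.image Prod.snd)).choose_spec.1
      (Or.inl (hA n (s.image Prod.snd)).choose_spec.2)

lemma inv_step2 {s : Finset (ℕ × ℕ)} (hs : Inv A B s) (n : ℕ) :
    Inv A B (step2 B hB s n) := by
  dsimp only [step2]; split_ifs with h1
  · exact hs
  · exact inv_insert_snd A B hA hB hs h1 (hB n (s.image Prod.fst)).choose_spec.1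
      (Or.inr (hB n (s.image Prod.fst)).choose_spec.2)

lemma inv_step {s : Finset (ℕ × ℕ)} (hs : Inv A B s) (n : ℕ) :
    Inv A B (step A B hA hB s n) :=
  inv_step2 A B hA hB (inv_step1 A B hA hB hs n) n

noncomputable def chain : ℕ → Finset (ℕ × ℕ)
  | 0 => ∅
  | n + 1 => step A B hA hB (chain n) n

lemma inv_chain (n : ℕ) : Inv A B (chain A B hA hB n) := by
  induction n with
  | zero => exact ⟨by simp [chain], by simp [chain], by simp [chain]⟩
  | succ n ih => exact inv_step A B hA hB ih n

lemma chain_mono : Monotone (chain A B hA hB) := by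
  apply monotone_nat_of_le_succ
  intro n
  exact subset_step A B hA hB _ n

lemma exists_bijection :
    ∃ b : ℕ ≃ ℕ, ∀ k, A k (b k) ∨ B k (b k) := by
  classical
  set σ := chain A B hA hB with hσ
  have hmem : ∀ p : ℕ × ℕ, ∀ {n n'}, p ∈ σ n → n ≤ n' → p ∈ σ n' :=
    fun p {n n'} hp h => chain_mono A B hA hB h hp
  -- functionality
  have hfun : ∀ {k m m'}, (∃ n, (k, m) ∈ σ n) → (∃ n, (k, m') ∈ σ n) → m = m' := by
    rintro k m m' ⟨n1, h1⟩ ⟨n2, h2⟩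
    have h1' := hmem _ h1 (le_max_left n1 n2)
    have h2' := hmem _ h2 (le_max_right n1 n2)
    have := (inv_chain A B hA hB (max n1 n2)).2.1 h1' h2' rfl
    exact congrArg Prod.snd this
  have hfun' : ∀ {k k' m}, (∃ n, (k, m) ∈ σ n) → (∃ n, (k', m) ∈ σ n) → k = k' := by
    rintro k k' m ⟨n1, h1⟩ ⟨n2, h2⟩
    have h1' := hmem _ h1 (le_max_left n1 n2)
    have h2' := hmem _ h2 (le_max_right n1 n2)
    have := (inv_chain A B hA hB (max n1 n2)).2.2 h1' h2' rfl
    exact congrArg Prod.fst this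
  have hcov : ∀ k, ∃ m, (k, m) ∈ σ (k + 1) := fun k => mem_fst_step A B hA hB (σ k) k
  have hcov' : ∀ m, ∃ k, (k, m) ∈ σ (m + 1) := fun m => mem_snd_step A B hA hB (σ m) m
  set b : ℕ → ℕ := fun k => (hcov k).choose with hb
  have hbmem : ∀ k, (k, b k) ∈ σ (k + 1) := fun k => (hcov k).choose_spec
  have hinj : Function.Injective b := by
    intro k1 k2 h
    exact hfun' ⟨_, hbmem k1⟩ ⟨_, h ▸ hbmem k2⟩
  have hsurj : Function.Surjective b := by
    intro m
    obtain ⟨k, hk⟩ := hcov' m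
    exact ⟨k, hfun ⟨_, hbmem k⟩ ⟨_, hk⟩⟩
  refine ⟨Equiv.ofBijective b ⟨hinj, hsurj⟩, fun k => ?_⟩
  have := (inv_chain A B hA hB (k + 1)).1 _ (hbmem k)
  exact this




end BF

lemma exists_min_pos (g : ℕ → ℝ) (N : ℕ) (hg : ∀ k < N, 0 < g k) :
    ∃ δ > 0, ∀ k < N, δ ≤ g k := by
  induction N with
  | zero => exact ⟨1, one_pos, fun k hk => absurd hk (by omega)⟩
  | succ N ih =>
    obtain ⟨δ, hδ, H⟩ := ih (fun k hk => hg k (by omega))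
    refine ⟨min δ (g N), lt_min hδ (hg N (by omega)), fun k hk => ?_⟩
    rcases Nat.lt_succ_iff_lt_or_eq.1 hk with h | rfl
    · exact (min_le_left _ _).trans (H k h)
    · exact min_le_right _ _

lemma exists_forall_ge_not_mem {S : Set ℕ} (hS : S.Finite) : ∃ N, ∀ k ≥ N, k ∉ S := by
  obtain ⟨N, hN⟩ := hS.bddAbove
  exact ⟨N + 1, fun k hk hkS => by have := hN hkS; omega⟩

variable {Y : Type} [TopologicalSpace Y]

lemma isolated_of_dense_embedding [T1Space Y] {f : ℕ → Y} (hf : IsEmbedding f)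
    (hd : Dense (Set.range f)) (n : ℕ) : IsOpen ({f n} : Set Y) := by
  classical
  have e := hf.toHomeomorph
  haveI hdisc : DiscreteTopology ↥(Set.range f) := by
    rw [discreteTopology_iff_isOpen_singleton]
    intro a
    have : ({a} : Set ↥(Set.range f)) = e '' {e.symm a} := by
      rw [Set.image_singleton, Homeomorph.apply_symm_apply]
    rw [this]
    exact e.isOpenMap _ (isOpen_discrete _)
  have hopen : IsOpen ({⟨f n, ⟨n, rfl⟩⟩} : Set ↥(Set.range f)) := isOpen_discrete _
  rw [isOpen_induced_iff] at hopen
  obtain ⟨V, hV, hVeq⟩ := hopen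
  have hfnV : f n ∈ V := by
    have : (⟨f n, ⟨n, rfl⟩⟩ : ↥(Set.range f)) ∈ Subtype.val ⁻¹' V := by
      rw [hVeq]; rfl
    exact this
  have hVsub : V ⊆ {f n} := by
    intro y hyV
    by_contra hy
    have hW : IsOpen (V ∩ {f n}ᶜ) := hV.inter isClosed_singleton.isOpen_compl
    obtain ⟨z, hz, hzW⟩ := hd.exists_mem_open hW ⟨y, hyV, hy⟩
    obtain ⟨m, rfl⟩ := hz
    have : (⟨f m, ⟨m, rfl⟩⟩ : ↥(Set.range f)) ∈ Subtype.val ⁻¹' V := hzW.1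
    rw [hVeq] at this
    exact hzW.2 (congrArg Subtype.val this)
  have : V = {f n} := Subset.antisymm hVsub (by simpa using hfnV)
  exact this ▸ hV

lemma isOpen_range_of_dense_embedding [T1Space Y] {f : ℕ → Y} (hf : IsEmbedding f)
    (hd : Dense (Set.range f)) : IsOpen (Set.range f) := by
  rw [Set.range_eq_iUnion]
  exact isOpen_iUnion fun n => isolated_of_dense_embedding hf hd n

lemma boundary_nonempty [T1Space Y] [CompactSpace Y] {f : ℕ → Y} (hf : IsEmbedding f)
    (hd : Dense (Set.range f)) : ((Set.range f)ᶜ).Nonempty := by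
  rw [Set.nonempty_compl]
  intro hsurj
  haveI : DiscreteTopology Y := by
    rw [discreteTopology_iff_isOpen_singleton]
    intro y
    have : y ∈ Set.range f := hsurj ▸ Set.mem_univ y
    obtain ⟨n, rfl⟩ := this
    exact isolated_of_dense_embedding hf hd n
  haveI : Finite Y := finite_of_compact_of_discrete
  exact Set.infinite_range_of_injective hf.injective (Set.toFinite _)




theorem existence (X : Type) [TopologicalSpace X] [CompactSpace X] [MetrizableSpace X]
    [Nonempty X] :
    ∃ (Y : Type) (_ : TopologicalSpace Y),
      CompactSpace Y ∧ MetrizableSpace Y ∧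
      ∃ f : ℕ → Y, IsEmbedding f ∧ Dense (Set.range f) ∧
        Nonempty (↥(Set.range f)ᶜ ≃ₜ X) := by
  classical
  letI : MetricSpace X := TopologicalSpace.metrizableSpaceMetric X
  haveI : SeparableSpace X := inferInstance
  obtain ⟨u, hu⟩ := TopologicalSpace.exists_dense_seq X
  set v : ℕ → X := fun n => u (Nat.unpair n).1 with hv
  set g : ℕ → X × ℝ := fun n => (v n, 1 / (n + 1)) with hg
  have hheight : ∀ n : ℕ, (0:ℝ) < 1 / (n + 1) := fun n => by positivity
  have hheight1 : ∀ n : ℕ, (1:ℝ) / (n + 1) ≤ 1 := by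
    intro n
    rw [div_le_one (by positivity)]
    have : (0:ℝ) ≤ (n:ℝ) := Nat.cast_nonneg n
    linarith
  have hhinj : Function.Injective (fun n : ℕ => (1:ℝ) / (n + 1)) := by
    intro n m hnm
    have h1 : ((n:ℝ) + 1) ≠ 0 := by positivity
    have h2 : ((m:ℝ) + 1) ≠ 0 := by positivity
    field_simp at hnm
    have hh : (n:ℝ) = m := by linarith
    exact_mod_cast hh
  have hhanti : ∀ {n m : ℕ}, n < m → (1:ℝ) / (m + 1) < 1 / (n + 1) := by
    intro n m hnm
    apply one_div_lt_one_div_of_lt (by positivity)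
    have : (n:ℝ) < (m:ℝ) := by exact_mod_cast hnm
    linarith
  set S : Set (X × ℝ) := (Set.range fun x : X => (x, (0:ℝ))) ∪ Set.range g with hS
  -- S is closed
  have hSclosed : IsClosed S := by
    rw [← isOpen_compl_iff, isOpen_iff_mem_nhds]
    intro p hp
    obtain ⟨x, t⟩ := p
    have ht0 : t ≠ 0 := by
      intro h0
      exact hp (Or.inl ⟨x, by rw [h0]⟩)
    rcases lt_or_gt_of_ne ht0 with htneg | htpos
    · have hopen : IsOpen ((Set.univ : Set X) ×ˢ Set.Iio (0:ℝ)) :=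
        isOpen_univ.prod isOpen_Iio
      refine Filter.mem_of_superset (hopen.mem_nhds ⟨Set.mem_univ _, htneg⟩) ?_
      rintro ⟨x', t'⟩ ⟨-, ht'⟩ hmem
      rcases hmem with ⟨x'', hx''⟩ | ⟨n, hn⟩
      · have : t' = 0 := (Prod.ext_iff.1 hx''.symm).2
        simp only [Set.mem_Iio, this] at ht'
        exact lt_irrefl _ ht'
      · have : (1:ℝ) / (n + 1) = t' := (Prod.ext_iff.1 hn).2
        have := hheight n
        simp only [Set.mem_Iio] at ht'
        linarith
    · -- t > 0
      set F : Set ℕ := {n | t / 2 < 1 / (n + 1)} with hF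
      have hFfin : F.Finite := by
        obtain ⟨N, hN⟩ := exists_nat_gt (2 / t)
        refine Set.Finite.subset (Set.finite_Iio N) ?_
        intro n hn
        simp only [hF, Set.mem_setOf_eq] at hn
        simp only [Set.mem_Iio]
        by_contra hnN
        push_neg at hnN
        have h1 : (N:ℝ) ≤ (n:ℝ) := by exact_mod_cast hnN
        have h2 : 2 / t < (n:ℝ) + 1 := by linarith
        rw [div_lt_iff₀ (by positivity)] at h2
        rw [div_lt_div_iff₀ (by positivity) (by positivity)] at hn
        nlinarith
      have hopen : IsOpen (((Set.univ : Set X) ×ˢ Set.Ioi (t/2)) \ (g '' F)) :=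
        (isOpen_univ.prod isOpen_Ioi).sdiff (hFfin.image g).isClosed
      have hpmem : (x, t) ∈ ((Set.univ : Set X) ×ˢ Set.Ioi (t/2)) \ (g '' F) := by
        refine ⟨⟨Set.mem_univ _, by simp; linarith⟩, fun hmem => ?_⟩
        obtain ⟨n, -, hn⟩ := hmem
        exact hp (Or.inr ⟨n, hn⟩)
      refine Filter.mem_of_superset (hopen.mem_nhds hpmem) ?_
      rintro ⟨x', t'⟩ ⟨⟨-, ht'⟩, hnotF⟩ hmem
      simp only [Set.mem_Ioi] at ht'
      rcases hmem with ⟨x'', hx''⟩ | ⟨n, hn⟩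
      · have : t' = 0 := (Prod.ext_iff.1 hx''.symm).2
        linarith
      · have hth : (1:ℝ) / (n + 1) = t' := (Prod.ext_iff.1 hn).2
        have hnF : n ∈ F := by
          simp only [hF, Set.mem_setOf_eq, hth]
          exact ht'
        exact hnotF ⟨n, hnF, hn⟩
  have hScpt : IsCompact S := by
    refine IsCompact.of_isClosed_subset (isCompact_univ.prod (isCompact_Icc (a := (-1:ℝ)) (b := 1)))
      hSclosed ?_
    rintro ⟨x', t'⟩ hmem
    rcases hmem with ⟨x'', hx''⟩ | ⟨n, hn⟩
    · have : t' = 0 := (Prod.ext_iff.1 hx''.symm).2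
      exact ⟨Set.mem_univ _, by rw [this]; constructor <;> norm_num⟩
    · have : (1:ℝ) / (n + 1) = t' := (Prod.ext_iff.1 hn).2
      refine ⟨Set.mem_univ _, ?_, ?_⟩
      · have := hheight n; linarith
      · have := hheight1 n; linarith
  refine ⟨↥S, inferInstance, isCompact_iff_compactSpace.mp hScpt, inferInstance, ?_⟩
  set f : ℕ → ↥S := fun n => ⟨g n, Or.inr ⟨n, rfl⟩⟩ with hf
  have hfinj : Function.Injective f := by
    intro n m hnm
    have : g n = g m := congrArg Subtype.val hnm
    exact hhinj ((Prod.ext_iff.1 this).2)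
  -- each f n is isolated
  have hisol : ∀ n, IsOpen ({f n} : Set ↥S) := by
    intro n
    set V : Set (X × ℝ) := ((Set.univ : Set X) ×ˢ Set.Ioi ((1:ℝ)/(n+2))) \ (g '' {m | m < n})
      with hV
    have hVopen : IsOpen V :=
      (isOpen_univ.prod isOpen_Ioi).sdiff (((Set.finite_Iio n).image g).isClosed)
    have key : ∀ y : ↥S, (y : X × ℝ) ∈ V ↔ y = f n := by
      intro y
      constructor
      · rintro ⟨⟨-, hy2⟩, hynot⟩
        simp only [Set.mem_Ioi] at hy2
        rcases y.2 with ⟨x'', hx''⟩ | ⟨m, hm⟩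
        · exfalso
          have : (y : X × ℝ).2 = 0 := (Prod.ext_iff.1 hx''.symm).2
          rw [this] at hy2
          have : (0:ℝ) < 1 / (n + 2) := by positivity
          linarith
        · have hth : (1:ℝ) / (m + 1) = (y : X × ℝ).2 := (Prod.ext_iff.1 hm).2
          have hmn : m = n := by
            by_contra hne
            rcases Nat.lt_or_ge m n with hlt | hge
            · exact hynot ⟨m, hlt, hm⟩
            · have hgt : n < m := lt_of_le_of_ne hge (Ne.symm hne)
              have : (1:ℝ) / (m + 1) ≤ 1 / (n + 2) := by
                apply one_div_le_one_div_of_le (by positivity)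
                have : (n:ℝ) + 1 ≤ (m:ℝ) := by exact_mod_cast hgt
                linarith
              rw [hth] at this
              linarith
          subst hmn
          exact Subtype.ext hm.symm
      · rintro rfl
        refine ⟨⟨Set.mem_univ _, ?_⟩, ?_⟩
        · simp only [Set.mem_Ioi]
          show (1:ℝ)/(n+2) < (1:ℝ)/(n+1)
          apply one_div_lt_one_div_of_lt (by positivity)
          linarith
        · rintro ⟨m, hmlt, hm⟩
          have : (1:ℝ) / (m + 1) = 1 / (n + 1) := (Prod.ext_iff.1 hm).2
          have heq := hhinj this
          have hmlt' : m < n := hmlt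
          omega
    have : ({f n} : Set ↥S) = Subtype.val ⁻¹' V := by
      ext y
      simp only [Set.mem_singleton_iff, Set.mem_preimage]
      exact (key y).symm
    rw [this]
    exact hVopen.preimage continuous_subtype_val
  -- f is an embedding
  have hemb : IsEmbedding f := by
    refine ⟨⟨?_⟩, hfinj⟩
    apply le_antisymm
    · exact continuous_iff_le_induced.mp (continuous_of_discreteTopology)
    · intro s _
      refine isOpen_induced_iff.mpr ?_
      refine ⟨⋃ n ∈ s, ({f n} : Set ↥S), isOpen_biUnion (fun n _ => hisol n), ?_⟩
      ext m
      simp only [Set.mem_preimage, Set.mem_iUnion, Set.mem_singleton_iff]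
      constructor
      · rintro ⟨n, hn, hfn⟩
        rwa [← hfinj hfn.symm]
      · intro hm
        exact ⟨m, hm, rfl⟩
  -- dense range
  have hdense : Dense (Set.range f) := by
    rw [Metric.dense_iff]
    intro y r hr
    rcases y.2 with ⟨x, hx⟩ | ⟨n, hn⟩
    · -- y = (x, 0)
      obtain ⟨k, hk⟩ := Metric.denseRange_iff.mp hu x r hr
      obtain ⟨j, hj⟩ := exists_nat_gt (1 / r)
      have hjr : (1:ℝ) / (j + 1) < r := by
        rw [div_lt_iff₀ (by positivity)]
        rw [div_lt_iff₀ hr] at hj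
        nlinarith [hr, Nat.cast_nonneg (α := ℝ) j]
      set n := Nat.pair k j with hn
      refine ⟨f n, Metric.mem_ball.mpr ?_, Set.mem_range_self n⟩
      have hvn : v n = u k := by
        simp only [hv, hn, Nat.unpair_pair]
      rw [Subtype.dist_eq, ← hx, Prod.dist_eq]
      simp only [hvn]
      apply max_lt
      · rw [dist_comm]; change dist x (v n) < r; rwa [hvn]
      · rw [Real.dist_eq, sub_zero, abs_of_pos (hheight n)]
        have : (1:ℝ)/(n+1) ≤ 1/(j+1) := by
          apply one_div_le_one_div_of_le (by positivity)
          have : j ≤ n := Nat.right_le_pair k j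
          have : (j:ℝ) ≤ (n:ℝ) := by exact_mod_cast this
          linarith
        linarith
    · exact ⟨y, Metric.mem_ball_self hr, ⟨n, Subtype.ext hn⟩⟩
  -- boundary is homeomorphic to X
  have hbdry : ∀ y : ↥S, y ∈ (Set.range f)ᶜ ↔ (y : X × ℝ).2 = 0 := by
    intro y
    constructor
    · intro hy
      rcases y.2 with ⟨x, hx⟩ | ⟨n, hn⟩
      · exact (Prod.ext_iff.1 hx.symm).2
      · exact absurd ⟨n, Subtype.ext hn⟩ hy
    · intro hy2 ⟨n, hn⟩
      have : (1:ℝ)/(n+1) = (y : X × ℝ).2 := (Prod.ext_iff.1 (congrArg Subtype.val hn)).2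
      rw [hy2] at this
      exact absurd this (ne_of_gt (hheight n))
  refine ⟨f, hemb, hdense, ?_⟩
  -- build homeomorphism X ≃ₜ boundary
  have hmem : ∀ x : X, (⟨(x, 0), Or.inl ⟨x, rfl⟩⟩ : ↥S) ∈ (Set.range f)ᶜ := by
    intro x
    exact (hbdry _).mpr rfl
  set β : X → ↥(Set.range f)ᶜ := fun x => ⟨⟨(x, 0), Or.inl ⟨x, rfl⟩⟩, hmem x⟩ with hβ
  have hβbij : Function.Bijective β := by
    constructor
    · intro x x' hxx'
      have : ((x : X), (0:ℝ)) = (x', 0) := congrArg (Subtype.val ∘ Subtype.val) hxx'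
      exact (Prod.ext_iff.1 this).1
    · intro y
      have hy2 : ((y : ↥S) : X × ℝ).2 = 0 := (hbdry _).mp y.2
      refine ⟨((y : ↥S) : X × ℝ).1, ?_⟩
      refine Subtype.ext (Subtype.ext ?_)
      show (((y : ↥S) : X × ℝ).1, (0:ℝ)) = ((y : ↥S) : X × ℝ)
      rw [← hy2]
  have hβcont : Continuous β := by
    apply Continuous.subtype_mk
    apply Continuous.subtype_mk
    exact continuous_id.prodMk continuous_const
  exact ⟨(Continuous.homeoOfEquivCompactToT2 (f := Equiv.ofBijective β hβbij) hβcont).symm⟩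




theorem uniqueness (Y Y' : Type) [TopologicalSpace Y] [TopologicalSpace Y']
    [CompactSpace Y] [CompactSpace Y'] [MetrizableSpace Y] [MetrizableSpace Y']
    (f : ℕ → Y) (f' : ℕ → Y')
    (hf : IsEmbedding f) (hdf : Dense (Set.range f))
    (hf' : IsEmbedding f') (hdf' : Dense (Set.range f'))
    (hne : Nonempty (↥(Set.range f)ᶜ ≃ₜ ↥(Set.range f')ᶜ)) :
    ∃ φ : Y ≃ₜ Y', φ '' Set.range f = Set.range f' := by
  classical
  letI : MetricSpace Y := TopologicalSpace.metrizableSpaceMetric Y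
  letI : MetricSpace Y' := TopologicalSpace.metrizableSpaceMetric Y'
  obtain ⟨h⟩ := hne
  set K : Set Y := (Set.range f)ᶜ with hK
  set K' : Set Y' := (Set.range f')ᶜ with hK'
  -- basic facts
  have hKclosed : IsClosed K := (isOpen_range_of_dense_embedding hf hdf).isClosed_compl
  have hK'closed : IsClosed K' := (isOpen_range_of_dense_embedding hf' hdf').isClosed_compl
  have hKcpt : IsCompact K := hKclosed.isCompact
  have hK'cpt : IsCompact K' := hK'closed.isCompact
  have hKne : K.Nonempty := boundary_nonempty hf hdf
  have hK'ne : K'.Nonempty := boundary_nonempty hf' hdf'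
  -- nearest-point projections
  have hproj : ∀ y : Y, ∃ p : K, dist y (p : Y) = infDist y K := by
    intro y
    obtain ⟨p, hp, hdp⟩ := hKcpt.exists_infDist_eq_dist hKne y
    exact ⟨⟨p, hp⟩, hdp.symm⟩
  choose π hπ using hproj
  have hproj' : ∀ y : Y', ∃ p : K', dist y (p : Y') = infDist y K' := by
    intro y
    obtain ⟨p, hp, hdp⟩ := hK'cpt.exists_infDist_eq_dist hK'ne y
    exact ⟨⟨p, hp⟩, hdp.symm⟩
  choose π' hπ' using hproj'
  -- uniform continuity of h
  haveI : CompactSpace ↥K := isCompact_iff_compactSpace.mp hKcpt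
  have hhu : ∀ ε > (0:ℝ), ∃ δ > (0:ℝ), ∀ a b : ↥K, dist (a : Y) (b : Y) < δ →
      dist ((h a : Y')) ((h b : Y')) < ε := by
    intro ε hε
    have hu := CompactSpace.uniformContinuous_of_continuous h.continuous
    rw [Metric.uniformContinuous_iff] at hu
    obtain ⟨δ, hδ, H⟩ := hu ε hε
    refine ⟨δ, hδ, fun a b hab => ?_⟩
    have := H (a := a) (b := b) (by rwa [Subtype.dist_eq])
    rwa [Subtype.dist_eq] at this
  -- points of the sequences approach the boundary
  have hfin : ∀ (Z : Type) [inst : MetricSpace Z], ∀ [inst2 : CompactSpace Z], ∀ (g : ℕ → Z),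
      IsEmbedding g → Dense (Set.range g) → ∀ ε > (0:ℝ),
      {n | ε ≤ infDist (g n) (Set.range g)ᶜ}.Finite := by
    intro Z _ _ g hg hdg ε hε
    set A : Set Z := {y | ε ≤ infDist y (Set.range g)ᶜ} with hA
    have hAclosed : IsClosed A :=
      isClosed_le continuous_const (continuous_infDist_pt _)
    have hAcpt : IsCompact A := hAclosed.isCompact
    have hAsub : A ⊆ Set.range g := by
      intro y hy
      by_contra hyK
      have : infDist y (Set.range g)ᶜ = 0 := infDist_zero_of_mem hyK
      rw [hA, Set.mem_setOf_eq, this] at hy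
      exact absurd hy (not_le.mpr hε)
    have hcover : A ⊆ ⋃ n, ({g n} : Set Z) := by
      intro y hy
      obtain ⟨n, rfl⟩ := hAsub hy
      exact Set.mem_iUnion.2 ⟨n, rfl⟩
    obtain ⟨t, ht⟩ := hAcpt.elim_finite_subcover (fun n => ({g n} : Set Z))
      (fun n => isolated_of_dense_embedding hg hdg n) hcover
    have hAfin : A.Finite := by
      refine Set.Finite.subset ?_ ht
      exact t.finite_toSet.biUnion (fun n _ => Set.finite_singleton _)
    have : {n | ε ≤ infDist (g n) (Set.range g)ᶜ} = g ⁻¹' A := rfl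
    rw [this]
    exact hAfin.preimage hg.injective.injOn
  -- density approach lemma
  have happrox : ∀ (Z : Type) [inst : MetricSpace Z], ∀ (g : ℕ → Z), Dense (Set.range g) →
      ∀ z : Z, z ∈ (Set.range g)ᶜ → ∀ ε > (0:ℝ), ∀ F : Finset ℕ, ∃ m ∉ F, dist (g m) z < ε := by
    intro Z _ g hdg z hz ε hε F
    have hBopen : IsOpen (Metric.ball z ε \ (g '' F)) :=
      Metric.isOpen_ball.sdiff ((F.finite_toSet.image g).isClosed)
    have hzB : z ∈ Metric.ball z ε \ (g '' F) := by
      refine ⟨Metric.mem_ball_self hε, fun hzF => ?_⟩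
      obtain ⟨m, _, rfl⟩ := hzF
      exact hz ⟨m, rfl⟩
    obtain ⟨x, hxr, hxB⟩ := hdg.exists_mem_open hBopen ⟨z, hzB⟩
    obtain ⟨m, rfl⟩ := hxr
    refine ⟨m, fun hmF => hxB.2 ⟨m, hmF, rfl⟩, ?_⟩
    exact Metric.mem_ball.1 hxB.1
  -- the two matching predicates
  set A : ℕ → ℕ → Prop := fun k m => dist (f' m) ((h (π (f k)) : Y')) < 1 / (k + 1) with hAdef
  set B : ℕ → ℕ → Prop := fun k m => dist (f k) ((h.symm (π' (f' m)) : Y)) < 1 / (m + 1) with hBdef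
  have hA : ∀ k (F : Finset ℕ), ∃ m ∉ F, A k m := by
    intro k F
    have hpos : (0:ℝ) < 1 / (k + 1) := by positivity
    obtain ⟨m, hmF, hm⟩ := happrox Y' f' hdf' ((h (π (f k)) : Y')) (h (π (f k))).2 _ hpos F
    exact ⟨m, hmF, hm⟩
  have hB : ∀ m (F : Finset ℕ), ∃ k ∉ F, B k m := by
    intro m F
    have hpos : (0:ℝ) < 1 / (m + 1) := by positivity
    obtain ⟨k, hkF, hk⟩ := happrox Y f hdf ((h.symm (π' (f' m)) : Y)) (h.symm (π' (f' m))).2 _ hpos F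
    exact ⟨k, hkF, hk⟩
  obtain ⟨b, hbgood⟩ := exists_bijection A B hA hB
  -- key approximation property of b
  have hC : ∀ ε > (0:ℝ), ∃ N, ∀ k ≥ N, dist (f' (b k)) ((h (π (f k)) : Y')) < ε := by
    intro ε hε
    obtain ⟨δ, hδ, Hu⟩ := hhu (ε / 2) (by positivity)
    -- M₀ : boundary approach in Y'
    obtain ⟨M₀, hM₀⟩ := exists_forall_ge_not_mem
      (hfin Y' f' hf' hdf' (ε / 2) (by positivity))
    -- M₁ : 2/(m+1) < δ
    obtain ⟨M₁, hM₁⟩ := exists_nat_gt (2 / δ)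
    have hM₁' : ∀ m : ℕ, M₁ ≤ m → 2 / ((m : ℝ) + 1) < δ := by
      intro m hm
      have h1 : 2 / δ < (m : ℝ) + 1 := by
        refine lt_of_lt_of_le hM₁ ?_
        have : (M₁ : ℝ) ≤ (m : ℝ) := by exact_mod_cast hm
        linarith
      have h2 : (0:ℝ) < (m : ℝ) + 1 := by positivity
      rw [div_lt_iff₀ h2]
      calc (2:ℝ) = δ * (2 / δ) := by field_simp
        _ < δ * ((m : ℝ) + 1) := mul_lt_mul_of_pos_left h1 hδ
    set M := max M₀ M₁ with hM
    -- N₀ : beyond the (finitely many) k with b k < M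
    have hpreim : {k | b k < M}.Finite := by
      have : {k | b k < M} = ⇑b ⁻¹' (Set.Iio M) := rfl
      rw [this]
      exact (Set.finite_Iio M).preimage b.injective.injOn
    obtain ⟨N₀, hN₀⟩ := exists_forall_ge_not_mem hpreim
    -- N₁ : 1/(k+1) < ε
    obtain ⟨N₁, hN₁⟩ := exists_nat_gt (1 / ε)
    have hN₁' : ∀ k : ℕ, N₁ ≤ k → 1 / ((k : ℝ) + 1) < ε := by
      intro k hk
      have h1 : 1 / ε < (k : ℝ) + 1 := by
        refine lt_of_lt_of_le hN₁ ?_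
        have : (N₁ : ℝ) ≤ (k : ℝ) := by exact_mod_cast hk
        linarith
      have h2 : (0:ℝ) < (k : ℝ) + 1 := by positivity
      rw [div_lt_iff₀ h2]
      calc (1:ℝ) = ε * (1 / ε) := by field_simp
        _ < ε * ((k : ℝ) + 1) := mul_lt_mul_of_pos_left h1 hε
    refine ⟨max N₀ N₁, fun k hk => ?_⟩
    rcases hbgood k with hAk | hBk
    · exact lt_trans hAk (hN₁' k (le_trans (le_max_right _ _) hk))
    · -- backward case
      set m := b k with hm
      have hmM : M ≤ m := by
        by_contra hmM
        exact hN₀ k (le_trans (le_max_left _ _) hk) (not_le.1 hmM)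
      have hm0 : M₀ ≤ m := le_trans (le_max_left _ _) hmM
      have hm1 : M₁ ≤ m := le_trans (le_max_right _ _) hmM
      -- first piece : dist (f' m) (π' (f' m)) = infDist < ε/2
      have hd1 : dist (f' m) ((π' (f' m) : Y')) < ε / 2 := by
        rw [hπ' (f' m)]
        by_contra hcon
        exact hM₀ m hm0 (not_lt.1 hcon)
      -- second piece via uniform continuity
      have hsub : dist ((h.symm (π' (f' m)) : Y)) ((π (f k) : Y)) < δ := by
        have t1 : dist (f k) ((h.symm (π' (f' m)) : Y)) < 1 / (m + 1) := hBk
        have t2 : dist (f k) ((π (f k) : Y)) ≤ dist (f k) ((h.symm (π' (f' m)) : Y)) := by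
          rw [hπ (f k)]
          exact infDist_le_dist_of_mem (h.symm (π' (f' m))).2
        have t3 : dist ((h.symm (π' (f' m)) : Y)) ((π (f k) : Y)) ≤
            dist ((h.symm (π' (f' m)) : Y)) (f k) + dist (f k) ((π (f k) : Y)) :=
          dist_triangle _ _ _
        rw [dist_comm ((h.symm (π' (f' m)) : Y)) (f k)] at t3
        have hb2 : 2 / ((m:ℝ) + 1) < δ := hM₁' m hm1
        have : 1 / ((m:ℝ) + 1) + 1 / ((m:ℝ) + 1) = 2 / ((m:ℝ)+1) := by ring
        linarith
      have hd2 : dist ((π' (f' m) : Y')) ((h (π (f k)) : Y')) < ε / 2 := by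
        have := Hu (h.symm (π' (f' m))) (π (f k)) hsub
        rwa [Homeomorph.apply_symm_apply] at this
      calc dist (f' m) ((h (π (f k)) : Y'))
          ≤ dist (f' m) ((π' (f' m) : Y')) + dist ((π' (f' m) : Y')) ((h (π (f k)) : Y')) :=
            dist_triangle _ _ _
        _ < ε / 2 + ε / 2 := add_lt_add hd1 hd2
        _ = ε := add_halves ε
  -- define the bijection φ
  set φ : Y → Y' := fun y =>
    if hy : y ∈ Set.range f then f' (b hy.choose) else (h ⟨y, hy⟩ : Y') with hφdef
  set ψ : Y' → Y := fun y' =>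
    if hy' : y' ∈ Set.range f' then f (b.symm hy'.choose) else (h.symm ⟨y', hy'⟩ : Y) with hψdef
  have hφf : ∀ k, φ (f k) = f' (b k) := by
    intro k
    have hy : f k ∈ Set.range f := ⟨k, rfl⟩
    rw [hφdef]
    simp only [dif_pos hy]
    congr 1
    exact congrArg b (hf.injective hy.choose_spec)
  have hφK : ∀ (y : Y) (hy : y ∈ K), φ y = (h ⟨y, hy⟩ : Y') := by
    intro y hy
    rw [hφdef]
    simp only [dif_neg (show ¬ y ∈ Set.range f from hy)]
  have hψf' : ∀ m, ψ (f' m) = f (b.symm m) := by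
    intro m
    have hy : f' m ∈ Set.range f' := ⟨m, rfl⟩
    rw [hψdef]
    simp only [dif_pos hy]
    congr 1
    exact congrArg b.symm (hf'.injective hy.choose_spec)
  have hψK' : ∀ (y' : Y') (hy' : y' ∈ K'), ψ y' = (h.symm ⟨y', hy'⟩ : Y) := by
    intro y' hy'
    rw [hψdef]
    simp only [dif_neg (show ¬ y' ∈ Set.range f' from hy')]
  have hleft : Function.LeftInverse ψ φ := by
    intro y
    by_cases hy : y ∈ Set.range f
    · obtain ⟨k, rfl⟩ := hy
      rw [hφf k, hψf' (b k), Equiv.symm_apply_apply]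
    · rw [hφK y hy, hψK' _ (h ⟨y, hy⟩).2]
      have : (⟨(h ⟨y, hy⟩ : Y'), (h ⟨y, hy⟩).2⟩ : ↥K') = h ⟨y, hy⟩ := Subtype.ext rfl
      rw [this, Homeomorph.symm_apply_apply]
  have hright : Function.RightInverse ψ φ := by
    intro y'
    by_cases hy' : y' ∈ Set.range f'
    · obtain ⟨m, rfl⟩ := hy'
      rw [hψf' m, hφf (b.symm m), Equiv.apply_symm_apply]
    · rw [hψK' y' hy', hφK _ (h.symm ⟨y', hy'⟩).2]
      have : (⟨(h.symm ⟨y', hy'⟩ : Y), (h.symm ⟨y', hy'⟩).2⟩ : ↥K) = h.symm ⟨y', hy'⟩ :=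
        Subtype.ext rfl
      rw [this, Homeomorph.apply_symm_apply]
  set E : Y ≃ Y' := ⟨φ, ψ, hleft, hright⟩ with hE
  -- continuity of φ
  have hcont : Continuous φ := by
    rw [continuous_iff_continuousAt]
    intro y
    by_cases hy : y ∈ Set.range f
    · obtain ⟨k, rfl⟩ := hy
      have hopen : IsOpen ({f k} : Set Y) := isolated_of_dense_embedding hf hdf k
      rw [isOpen_singleton_iff_nhds_eq_pure] at hopen
      unfold ContinuousAt
      rw [hopen]
      exact tendsto_pure_nhds φ (f k)
    · -- y ∈ K
      have hyK : y ∈ K := hy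
      rw [Metric.continuousAt_iff]
      intro ε hε
      obtain ⟨δ₁, hδ₁, Hu⟩ := hhu (ε / 2) (by positivity)
      obtain ⟨N, hN⟩ := hC (ε / 2) (by positivity)
      obtain ⟨δ₂, hδ₂, Hδ₂⟩ := exists_min_pos (fun k => dist (f k) y) N (by
        intro k hk
        rw [dist_pos]
        intro hkeq
        exact hyK ⟨k, hkeq⟩)
      refine ⟨min (δ₁ / 2) δ₂, by positivity, fun x hx => ?_⟩
      rw [hφK y hyK]
      by_cases hxr : x ∈ Set.range f
      · obtain ⟨k, rfl⟩ := hxr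
        rw [hφf k]
        have hkN : N ≤ k := by
          by_contra hkN
          have := Hδ₂ k (not_le.1 hkN)
          have hx' : dist (f k) y < δ₂ := lt_of_lt_of_le hx (min_le_right _ _)
          linarith
        have hδ1' : dist (f k) y < δ₁ / 2 := lt_of_lt_of_le hx (min_le_left _ _)
        have hπclose : dist ((π (f k) : Y)) y < δ₁ := by
          have t1 : dist (f k) ((π (f k) : Y)) ≤ dist (f k) y := by
            rw [hπ (f k)]
            exact infDist_le_dist_of_mem hyK
          have t2 : dist ((π (f k) : Y)) y ≤ dist ((π (f k) : Y)) (f k) + dist (f k) y :=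
            dist_triangle _ _ _
          rw [dist_comm ((π (f k) : Y)) (f k)] at t2
          linarith
        have h2 : dist ((h (π (f k)) : Y')) ((h ⟨y, hyK⟩ : Y')) < ε / 2 :=
          Hu (π (f k)) ⟨y, hyK⟩ hπclose
        calc dist (f' (b k)) ((h ⟨y, hyK⟩ : Y'))
            ≤ dist (f' (b k)) ((h (π (f k)) : Y')) + dist ((h (π (f k)) : Y')) ((h ⟨y, hyK⟩ : Y')) :=
              dist_triangle _ _ _
          _ < ε / 2 + ε / 2 := add_lt_add (hN k hkN) h2
          _ = ε := add_halves ε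
      · have hxK : x ∈ K := hxr
        rw [hφK x hxK]
        have : dist x y < δ₁ := lt_of_lt_of_le hx (le_trans (min_le_left _ _) (by linarith))
        have := Hu ⟨x, hxK⟩ ⟨y, hyK⟩ this
        exact lt_trans this (by linarith)
  -- assemble the homeomorphism
  have hcontE : Continuous (E : Y → Y') := hcont
  let Φ : Y ≃ₜ Y' := hcontE.homeoOfEquivCompactToT2
  refine ⟨Φ, ?_⟩
  have hΦ : (Φ : Y → Y') = φ := rfl
  rw [hΦ, ← Set.range_comp]
  have : φ ∘ f = f' ∘ b := funext hφf
  rw [this, Set.range_comp, Equiv.range_eq_univ, Set.image_univ]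

end Stmt12Aux
end

open TopologicalSpace

/-- **Classification of metrisable compactifications of `ℕ`.**
(Existence) every non-empty compact metrisable space `X` is the boundary of a metrisable
compactification of the discrete space `ℕ`; (uniqueness) any two metrisable
compactifications of `ℕ` with homeomorphic boundaries are homeomorphic as pairs. -/
theorem stmt12 :
    (∀ (X : Type) [TopologicalSpace X] [CompactSpace X] [MetrizableSpace X] [Nonempty X],
      ∃ (Y : Type) (_ : TopologicalSpace Y),
        CompactSpace Y ∧ MetrizableSpace Y ∧
        ∃ f : ℕ → Y, Topology.IsEmbedding f ∧ Dense (Set.range f) ∧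
          Nonempty (↥(Set.range f)ᶜ ≃ₜ X)) ∧
    (∀ (Y Y' : Type) [TopologicalSpace Y] [TopologicalSpace Y']
      [CompactSpace Y] [CompactSpace Y'] [MetrizableSpace Y] [MetrizableSpace Y']
      (f : ℕ → Y) (f' : ℕ → Y'),
      Topology.IsEmbedding f → Dense (Set.range f) → Topology.IsEmbedding f' → Dense (Set.range f') →
      Nonempty (↥(Set.range f)ᶜ ≃ₜ ↥(Set.range f')ᶜ) →
      ∃ φ : Y ≃ₜ Y', φ '' Set.range f = Set.range f') := by
  constructor
  · intro X _ _ _ _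
    exact Stmt12Aux.existence X
  · intro Y Y' _ _ _ _ _ _ f f' hf hdf hf' hdf' hne
    exact Stmt12Aux.uniqueness Y Y' f f' hf hdf hf' hdf' hne
end

section
/- For a compact topological space E, let Υ^C(E) denote the quotient of the product space E × C̃ obtained by collapsing E × {x} to a single point for each x ∈ C, where C ⊂ [0,1] is the middle-thirds Cantor set, M is the set of midpoints of the connected components of [0,1] ∖ C, and C̃ = C ∪ M ⊆ ℝ with the subspace topology. For a countable ordinal α, let [0, ω^α] denote the set of ordinals ≤ ω^α with the order topology. Then for any two distinct countable ordinals α ≠ β, the spaces Υ^C([0, ω^α]) and Υ^C([0, ω^β]) are not homeomorphic. -/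
/-- The set of midpoints of the connected components of `[0,1] \ C`, where `C` is the
middle-thirds Cantor set. -/
noncomputable def midSet : Set ℝ :=
  {m | ∃ x ∈ Set.Icc (0 : ℝ) 1 \ cantorSet,
    m = (sInf (connectedComponentIn (Set.Icc (0 : ℝ) 1 \ cantorSet) x) +
         sSup (connectedComponentIn (Set.Icc (0 : ℝ) 1 \ cantorSet) x)) / 2}

/-- `C̃ = C ∪ M ⊆ ℝ`, the metrisable compactification of the countable discrete set `M`
with boundary the middle-thirds Cantor set `C`. -/
noncomputable def cTilde : Set ℝ := cantorSet ∪ midSet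

/-- The equivalence relation on `E × C̃` collapsing each slice `E × {x}`, `x ∈ C`,
to a point. -/
def upsilonSetoid (E : Type*) : Setoid (E × ↥cTilde) where
  r p q := p = q ∨ ((p.2 : ℝ) = (q.2 : ℝ) ∧ (p.2 : ℝ) ∈ cantorSet)
  iseqv := by
    constructor
    · intro p
      exact Or.inl rfl
    · rintro p q (rfl | ⟨h, hm⟩)
      · exact Or.inl rfl
      · exact Or.inr ⟨h.symm, h ▸ hm⟩
    · rintro p q r (rfl | ⟨h, hm⟩) (rfl | ⟨h', hm'⟩)
      · exact Or.inl rfl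
      · exact Or.inr ⟨h', hm'⟩
      · exact Or.inr ⟨h, hm⟩
      · exact Or.inr ⟨h.trans h', hm⟩

/-- The Cantor compactification `Υ^C(E) = (Eω)^C`: the quotient of `E × C̃` collapsing each
slice `E × {x}`, `x ∈ C`, to a point, with the quotient topology. -/
def UpsilonC (E : Type*) [TopologicalSpace E] : Type _ :=
  Quotient (upsilonSetoid E)

instance (E : Type*) [TopologicalSpace E] : TopologicalSpace (UpsilonC E) :=
  instTopologicalSpaceQuotient



open Set Filter Topology Ordinal

/-! ### Extra facts about the Cantor set -/

lemma one_mem_cantorSet : (1 : ℝ) ∈ cantorSet := by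
  refine Set.mem_iInter.mpr fun n => ?_
  induction n with
  | zero => exact ⟨zero_le_one, le_refl 1⟩
  | succ n ih => exact Or.inr ⟨1, ih, by norm_num⟩

lemma div3_mem_cantorSet {x : ℝ} (hx : x ∈ cantorSet) : x / 3 ∈ cantorSet := by
  refine Set.mem_iInter.mpr fun n => ?_
  match n with
  | 0 =>
    obtain ⟨h0, h1⟩ := preCantorSet_subset_unitInterval (Set.mem_iInter.mp hx 0)
    exact ⟨by linarith, by linarith⟩
  | n + 1 => exact Or.inl ⟨x, Set.mem_iInter.mp hx n, rfl⟩

lemma two_add_div3_mem_cantorSet {x : ℝ} (hx : x ∈ cantorSet) : (2 + x) / 3 ∈ cantorSet := by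
  refine Set.mem_iInter.mpr fun n => ?_
  match n with
  | 0 =>
    obtain ⟨h0, h1⟩ := preCantorSet_subset_unitInterval (Set.mem_iInter.mp hx 0)
    exact ⟨by linarith, by linarith⟩
  | n + 1 => exact Or.inr ⟨x, Set.mem_iInter.mp hx n, rfl⟩

lemma triple_mem_cantorSet_of_lt {x : ℝ} (hx : x ∈ cantorSet) (h : x < 2/3) :
    3 * x ∈ cantorSet := by
  refine Set.mem_iInter.mpr fun n => ?_
  have hmem := Set.mem_iInter.mp hx (n + 1)
  rcases hmem with ⟨y, hy, hxy⟩ | ⟨y, hy, hxy⟩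
  · have : y = 3 * x := by rw [← hxy]; ring
    rwa [← this]
  · exfalso
    obtain ⟨h0, h1⟩ := preCantorSet_subset_unitInterval hy
    rw [← hxy] at h; linarith

lemma triple_sub_two_mem_cantorSet_of_ge {x : ℝ} (hx : x ∈ cantorSet) (h : 2/3 ≤ x) :
    3 * x - 2 ∈ cantorSet := by
  refine Set.mem_iInter.mpr fun n => ?_
  have hmem := Set.mem_iInter.mp hx (n + 1)
  rcases hmem with ⟨y, hy, hxy⟩ | ⟨y, hy, hxy⟩
  · exfalso
    obtain ⟨h0, h1⟩ := preCantorSet_subset_unitInterval hy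
    rw [← hxy] at h; linarith
  · have : y = 3 * x - 2 := by rw [← hxy]; ring
    rwa [← this]

/-- The Cantor set has no isolated points: quantitative form. -/
lemma cantorSet_exists_ne (n : ℕ) :
    ∀ c ∈ cantorSet, ∃ c' ∈ cantorSet, c' ≠ c ∧ |c' - c| ≤ (1/3) ^ n := by
  induction n with
  | zero =>
    intro c hc
    obtain ⟨h0, h1⟩ := preCantorSet_subset_unitInterval (Set.mem_iInter.mp hc 0)
    rcases eq_or_ne c 0 with rfl | hne
    · exact ⟨1, one_mem_cantorSet, one_ne_zero, by norm_num⟩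
    · refine ⟨0, zero_mem_cantorSet, Ne.symm hne, ?_⟩
      simpa [abs_of_nonneg h0] using h1
  | succ n ih =>
    intro c hc
    rcases lt_or_ge c (2/3) with h | h
    · obtain ⟨d, hd, hdne, hdist⟩ := ih (3 * c) (triple_mem_cantorSet_of_lt hc h)
      refine ⟨d / 3, div3_mem_cantorSet hd, ?_, ?_⟩
      · intro heq; apply hdne; field_simp at heq; linarith
      · have : d / 3 - c = (d - 3 * c) / 3 := by ring
        rw [this, abs_div, abs_of_pos (by norm_num : (0:ℝ) < 3)]
        rw [pow_succ]
        calc |d - 3 * c| / 3 ≤ (1/3)^n / 3 := by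
              exact div_le_div_of_nonneg_right hdist (by norm_num) |>.trans_eq rfl
          _ = (1/3)^n * (1/3) := by ring
    · obtain ⟨d, hd, hdne, hdist⟩ := ih (3 * c - 2) (triple_sub_two_mem_cantorSet_of_ge hc h)
      refine ⟨(2 + d) / 3, two_add_div3_mem_cantorSet hd, ?_, ?_⟩
      · intro heq; apply hdne; field_simp at heq; linarith
      · have : (2 + d) / 3 - c = (d - (3 * c - 2)) / 3 := by ring
        rw [this, abs_div, abs_of_pos (by norm_num : (0:ℝ) < 3)]
        rw [pow_succ]
        calc |d - (3 * c - 2)| / 3 ≤ (1/3)^n / 3 := by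
              exact div_le_div_of_nonneg_right hdist (by norm_num) |>.trans_eq rfl
          _ = (1/3)^n * (1/3) := by ring

lemma cantorSet_acc {c : ℝ} (hc : c ∈ cantorSet) : AccPt c (𝓟 cantorSet) := by
  rw [accPt_iff_nhds]
  intro U hU
  obtain ⟨ε, hε, hball⟩ := Metric.mem_nhds_iff.mp hU
  obtain ⟨n, hn⟩ := exists_pow_lt_of_lt_one hε (by norm_num : (1:ℝ)/3 < 1)
  obtain ⟨c', hc', hne, hdist⟩ := cantorSet_exists_ne n c hc
  refine ⟨c', ⟨hball ?_, hc'⟩, hne⟩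
  rw [Metric.mem_ball, Real.dist_eq]
  exact lt_of_le_of_lt hdist hn

/-! ### Facts about the midpoint set -/

namespace Aux

abbrev G : Set ℝ := Set.Icc (0 : ℝ) 1 \ cantorSet

lemma isOpen_G : IsOpen G := by
  have : G = Set.Ioo (0:ℝ) 1 \ cantorSet := by
    ext x
    constructor
    · rintro ⟨⟨h0, h1⟩, hx⟩
      refine ⟨⟨lt_of_le_of_ne h0 ?_, lt_of_le_of_ne h1 ?_⟩, hx⟩
      · rintro rfl; exact hx zero_mem_cantorSet
      · rintro rfl; exact hx one_mem_cantorSet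
    · rintro ⟨⟨h0, h1⟩, hx⟩
      exact ⟨⟨h0.le, h1.le⟩, hx⟩
  rw [this]
  exact isOpen_Ioo.sdiff isClosed_cantorSet

/-- The midpoint of a connected component of the complement belongs to the component. -/
lemma mid_mem_component {x : ℝ} (hx : x ∈ G) :
    (sInf (connectedComponentIn G x) + sSup (connectedComponentIn G x)) / 2 ∈
      connectedComponentIn G x := by
  set K := connectedComponentIn G x with hK
  have hxK : x ∈ K := mem_connectedComponentIn hx
  have hKsub : K ⊆ G := connectedComponentIn_subset _ _
  have hne : K.Nonempty := ⟨x, hxK⟩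
  have hbdd : BddAbove K := ⟨1, fun y hy => (hKsub hy).1.2⟩
  have hbdd' : BddBelow K := ⟨0, fun y hy => (hKsub hy).1.1⟩
  have hord : OrdConnected K := isPreconnected_connectedComponentIn.ordConnected
  set m := (sInf K + sSup K) / 2 with hm
  have h1 : sInf K ≤ sSup K := csInf_le_csSup hne hbdd' hbdd
  rcases eq_or_lt_of_le h1 with heq | hlt
  · -- K is a single point
    have hxm : x = m := by
      have h2 := csInf_le hbdd' hxK
      have h3 := le_csSup hbdd hxK
      rw [hm, ← heq]; linarith
    rwa [← hxm]
  · have hm1 : sInf K < m := by rw [hm]; linarith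
    have hm2 : m < sSup K := by rw [hm]; linarith
    obtain ⟨y, hyK, hy⟩ := exists_lt_of_csInf_lt hne hm1
    obtain ⟨z, hzK, hz⟩ := exists_lt_of_lt_csSup hne hm2
    exact hord.out hyK hzK ⟨hy.le, hz.le⟩

lemma midSet_subset_G : midSet ⊆ G := by
  rintro m ⟨x, hx, rfl⟩
  exact connectedComponentIn_subset _ _ (mid_mem_component hx)

lemma midSet_not_mem_cantorSet {m : ℝ} (hm : m ∈ midSet) : m ∉ cantorSet :=
  (midSet_subset_G hm).2

/-- Each midpoint is isolated in `C̃`: its gap component meets `C̃` only in itself. -/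
lemma midSet_isolated {m : ℝ} (hm : m ∈ midSet) :
    ∃ U : Set ℝ, IsOpen U ∧ m ∈ U ∧ U ∩ (cantorSet ∪ midSet) = {m} := by
  obtain ⟨x, hx, rfl⟩ := hm
  have hmK : (sInf (connectedComponentIn G x) + sSup (connectedComponentIn G x)) / 2 ∈
      connectedComponentIn G x := mid_mem_component hx
  refine ⟨connectedComponentIn G x, isOpen_G.connectedComponentIn, hmK, ?_⟩
  apply Set.Subset.antisymm
  · rintro y ⟨hyK, hy | hy⟩
    · exact absurd hy (connectedComponentIn_subset _ _ hyK).2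
    · obtain ⟨x', hx', rfl⟩ := hy
      have hyK' : (sInf (connectedComponentIn G x') + sSup (connectedComponentIn G x')) / 2 ∈
          connectedComponentIn G x' := mid_mem_component hx'
      have hKK' : connectedComponentIn G x = connectedComponentIn G x' :=
        (connectedComponentIn_eq hyK).trans (connectedComponentIn_eq hyK').symm
      rw [Set.mem_singleton_iff, hKK']
  · rintro y rfl
    exact ⟨hmK, Or.inr ⟨x, hx, rfl⟩⟩

lemma third_mem_cantorSet : (1:ℝ)/3 ∈ cantorSet := by
  have := div3_mem_cantorSet one_mem_cantorSet
  norm_num at this ⊢; exact this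

lemma two_third_mem_cantorSet : (2:ℝ)/3 ∈ cantorSet := by
  have := two_add_div3_mem_cantorSet zero_mem_cantorSet
  norm_num at this ⊢; exact this

lemma middle_gap_disjoint {y : ℝ} (h1 : 1/3 < y) (h2 : y < 2/3) : y ∉ cantorSet := by
  intro hy
  rcases Set.mem_iInter.mp hy 1 with ⟨z, hz, hzy⟩ | ⟨z, hz, hzy⟩ <;>
    · obtain ⟨hz0, hz1⟩ := preCantorSet_subset_unitInterval hz
      rw [← hzy] at h1 h2; nlinarith

lemma half_mem_G : (1:ℝ)/2 ∈ G :=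
  ⟨⟨by norm_num, by norm_num⟩, middle_gap_disjoint (by norm_num) (by norm_num)⟩

lemma component_half : connectedComponentIn G (1/2 : ℝ) = Set.Ioo (1/3) (2/3) := by
  apply Set.Subset.antisymm
  · intro y hyK
    have hord : OrdConnected (connectedComponentIn G (1/2 : ℝ)) :=
      isPreconnected_connectedComponentIn.ordConnected
    have hhalf : (1/2 : ℝ) ∈ connectedComponentIn G (1/2 : ℝ) :=
      mem_connectedComponentIn half_mem_G
    constructor
    · by_contra hle
      push_neg at hle
      have : (1:ℝ)/3 ∈ connectedComponentIn G (1/2 : ℝ) :=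
        hord.out hyK hhalf ⟨hle, by norm_num⟩
      exact (connectedComponentIn_subset _ _ this).2 third_mem_cantorSet
    · by_contra hle
      push_neg at hle
      have : (2:ℝ)/3 ∈ connectedComponentIn G (1/2 : ℝ) :=
        hord.out hhalf hyK ⟨by norm_num, hle⟩
      exact (connectedComponentIn_subset _ _ this).2 two_third_mem_cantorSet
  · apply IsPreconnected.subset_connectedComponentIn isPreconnected_Ioo
    · exact ⟨by norm_num, by norm_num⟩
    · rintro y ⟨hy1, hy2⟩
      exact ⟨⟨by linarith, by linarith⟩, middle_gap_disjoint hy1 hy2⟩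

lemma half_mem_midSet : ((1:ℝ)/2) ∈ midSet := by
  refine ⟨1/2, half_mem_G, ?_⟩
  rw [show (Set.Icc (0 : ℝ) 1 \ cantorSet) = G from rfl, component_half,
    csInf_Ioo (by norm_num), csSup_Ioo (by norm_num)]
  norm_num

end Aux

/-! ### Accumulation points and Cantor–Bendixson iterates -/

section CB

variable {X Y : Type*} [TopologicalSpace X] [TopologicalSpace Y]

lemma accPt_principal_mono {x : X} {s t : Set X} (h : s ⊆ t) (hx : AccPt x (𝓟 s)) :
    AccPt x (𝓟 t) :=
  hx.mono (principal_mono.mpr h)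

/-- Accumulation localises to an open neighbourhood. -/
lemma accPt_inter_open {x : X} {U T : Set X} (hU : IsOpen U) (hx : x ∈ U) :
    AccPt x (𝓟 T) ↔ AccPt x (𝓟 (T ∩ U)) := by
  constructor
  · rw [accPt_iff_nhds, accPt_iff_nhds]
    intro h V hV
    obtain ⟨y, ⟨hy1, hy2⟩, hy3⟩ := h (V ∩ U) (Filter.inter_mem hV (hU.mem_nhds hx))
    exact ⟨y, ⟨hy1.1, hy2, hy1.2⟩, hy3⟩
  · exact accPt_principal_mono Set.inter_subset_left

/-- Accumulation transfers along injective inducing maps. -/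
lemma accPt_image_iff {f : X → Y} (hf : IsInducing f) (hinj : Function.Injective f)
    {x : X} {s : Set X} : AccPt (f x) (𝓟 (f '' s)) ↔ AccPt x (𝓟 s) := by
  rw [accPt_iff_nhds, accPt_iff_nhds]
  constructor
  · intro h U hU
    rw [hf.nhds_eq_comap, Filter.mem_comap] at hU
    obtain ⟨V, hV, hVU⟩ := hU
    obtain ⟨y, ⟨hy1, z, hz, rfl⟩, hy3⟩ := h V hV
    exact ⟨z, ⟨hVU hy1, hz⟩, fun hzx => hy3 (by rw [hzx])⟩
  · intro h V hV
    have : f ⁻¹' V ∈ 𝓝 x := by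
      rw [hf.nhds_eq_comap]; exact Filter.preimage_mem_comap hV
    obtain ⟨z, ⟨hz1, hz2⟩, hz3⟩ := h _ this
    exact ⟨f z, ⟨hz1, Set.mem_image_of_mem f hz2⟩, fun h' => hz3 (hinj h')⟩

/-- The derived set (within `s`): points of `s` that are accumulation points of `s`. -/
def derSet (s : Set X) : Set X := {x | x ∈ s ∧ AccPt x (𝓟 s)}

lemma derSet_mono {s t : Set X} (h : s ⊆ t) : derSet s ⊆ derSet t :=
  fun x hx => ⟨h hx.1, accPt_principal_mono h hx.2⟩

lemma derSet_subset (s : Set X) : derSet s ⊆ s := fun _ hx => hx.1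

lemma derSet_preimage_homeomorph (h : X ≃ₜ Y) (s : Set Y) :
    derSet (h ⁻¹' s) = h ⁻¹' derSet s := by
  ext x
  have : AccPt x (𝓟 (h ⁻¹' s)) ↔ AccPt (h x) (𝓟 s) := by
    rw [← accPt_image_iff h.isInducing h.injective (s := h ⁻¹' s),
      Set.image_preimage_eq s h.surjective]
  simp only [derSet, Set.mem_setOf_eq, Set.mem_preimage, this]

/-- Transfinite iteration of the derived-set operation. -/
noncomputable def CB (X : Type*) [TopologicalSpace X] : Ordinal.{0} → Set X :=
  Ordinal.lt_wf.fix fun γ ih => derSet (⋂ δ : Set.Iio γ, ih δ.1 δ.2)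

lemma CB_eq (γ : Ordinal) : CB X γ = derSet (⋂ δ : Set.Iio γ, CB X δ.1) :=
  WellFounded.fix_eq _ _ _

lemma CB_antitone {γ γ' : Ordinal} (h : γ ≤ γ') : CB X γ' ⊆ CB X γ := by
  rw [CB_eq, CB_eq]
  apply derSet_mono
  exact Set.iInter_mono' fun δ => ⟨⟨δ.1, lt_of_lt_of_le δ.2 h⟩, le_refl _⟩

lemma CB_succ_subset (γ : Ordinal) : CB X (γ + 1) ⊆ derSet (CB X γ) := by
  rw [CB_eq]
  apply derSet_mono
  exact Set.iInter_subset (fun δ : Set.Iio (γ+1) => CB X δ.1) ⟨γ, lt_add_one γ⟩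

lemma CB_homeomorph (h : X ≃ₜ Y) (γ : Ordinal) : CB Y γ = ⇑h.symm ⁻¹' CB X γ := by
  induction γ using Ordinal.lt_wf.induction with
  | _ γ ih =>
    rw [CB_eq, CB_eq]
    have : (⋂ δ : Set.Iio γ, CB Y δ.1) = ⇑h.symm ⁻¹' ⋂ δ : Set.Iio γ, CB X δ.1 := by
      rw [Set.preimage_iInter]
      exact Set.iInter_congr fun δ => ih δ.1 δ.2
    rw [this, derSet_preimage_homeomorph h.symm]

end CB

/-! ### Ordinal lemmas -/

namespace Aux

open Ordinal

lemma opow_dvd_of_limit {γ ξ : Ordinal} (hγ : Order.IsSuccLimit γ) (h : ∀ δ < γ, ω ^ δ ∣ ξ) :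
    ω ^ γ ∣ ξ := by
  rw [Ordinal.dvd_iff_mod_eq_zero]
  by_contra hr
  have hne : (ω : Ordinal) ^ γ ≠ 0 := (Ordinal.opow_pos γ omega0_pos).ne'
  have hrlt : ξ % ω ^ γ < ω ^ γ := Ordinal.mod_lt ξ hne
  obtain ⟨δ, hδγ, hrδ⟩ := (Ordinal.lt_opow_of_isSuccLimit omega0_ne_zero hγ).mp hrlt
  have hdvd1 : ω ^ δ ∣ ω ^ γ * (ξ / ω ^ γ) :=
    (Ordinal.opow_dvd_opow ω hδγ.le).mul_right _
  have hdvd2 : ω ^ δ ∣ ξ % ω ^ γ := by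
    have := Ordinal.div_add_mod ξ (ω ^ γ)
    rw [← this] at h
    exact (Ordinal.dvd_add_iff hdvd1).mp (h δ hδγ)
  rcases hdvd2 with ⟨t, ht⟩
  rcases eq_or_ne t 0 with rfl | ht0
  · rw [mul_zero] at ht; exact hr ht
  · have : ω ^ δ ≤ ξ % ω ^ γ := by
      rw [ht]
      exact Ordinal.le_mul_left _ (pos_iff_ne_zero.mpr ht0)
    exact absurd hrδ (not_lt.mpr this)

/-- Members of an accumulating family near a multiple of `ω ^ (ν+1)`. -/
lemma acc_char_aux {ν ξ : Ordinal} (hξ0 : ξ ≠ 0) (hdvd : ω ^ (ν + 1) ∣ ξ) {p : Ordinal}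
    (hp : p < ξ) : ∃ x, (x ≠ 0 ∧ ω ^ ν ∣ x) ∧ p < x ∧ x < ξ := by
  obtain ⟨t, rfl⟩ := hdvd
  have ht0 : t ≠ 0 := by rintro rfl; simp at hξ0
  have hν0 : (ω:Ordinal) ^ ν ≠ 0 := (Ordinal.opow_pos ν omega0_pos).ne'
  have hq : (ω:Ordinal) ^ (ν+1) * t = ω ^ ν * (ω * t) := by
    rw [Ordinal.opow_add, Ordinal.opow_one, mul_assoc]
  have hqlim : Order.IsSuccLimit (ω * t : Ordinal) := by
    rw [Ordinal.isSuccLimit_iff_omega0_dvd]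
    exact ⟨_root_.mul_ne_zero omega0_ne_zero ht0, Dvd.intro t rfl⟩
  have hplt : p / ω ^ ν < ω * t := by
    rw [Ordinal.div_lt hν0, ← hq]; exact hp
  refine ⟨ω ^ ν * (p / ω ^ ν + 1), ⟨?_, Dvd.intro _ rfl⟩, ?_, ?_⟩
  · have : (0:Ordinal) < ω ^ ν * (p / ω ^ ν + 1) :=
      mul_pos (Ordinal.opow_pos ν omega0_pos) (Ordinal.succ_pos _)
    exact this.ne'
  · have := Ordinal.lt_mul_succ_div p hν0
    rwa [← Ordinal.add_one_eq_succ] at this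
  · rw [hq]
    refine (mul_lt_mul_iff_right₀ (Ordinal.opow_pos ν omega0_pos)).mpr ?_
    exact hqlim.succ_lt hplt

lemma dvd_of_acc_char {ν ξ : Ordinal} (hξ0 : ξ ≠ 0)
    (h : ∀ p < ξ, ∃ x, (x ≠ 0 ∧ ω ^ ν ∣ x) ∧ p < x ∧ x < ξ) : ω ^ (ν + 1) ∣ ξ := by
  have hν0 : (ω:Ordinal) ^ ν ≠ 0 := (Ordinal.opow_pos ν omega0_pos).ne'
  have hνpos : (0:Ordinal) < ω ^ ν := Ordinal.opow_pos ν omega0_pos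
  -- first, `ω ^ ν ∣ ξ`
  have h1 : ω ^ ν ∣ ξ := by
    rw [Ordinal.dvd_iff_mod_eq_zero]
    by_contra hr
    have hrlt : ξ % ω ^ ν < ω ^ ν := Ordinal.mod_lt ξ hν0
    have hplt : ω ^ ν * (ξ / ω ^ ν) < ξ := by
      conv_rhs => rw [← Ordinal.div_add_mod ξ (ω ^ ν)]
      simpa using (pos_iff_ne_zero.mpr hr)
    obtain ⟨x, ⟨hx0, u, rfl⟩, hx1, hx2⟩ := h _ hplt
    have hu : ξ / ω ^ ν < u := by
      exact (mul_lt_mul_iff_right₀ hνpos).mp hx1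
    have : ω ^ ν * (ξ / ω ^ ν + 1) ≤ ω ^ ν * u :=
      (mul_le_mul_iff_right₀ hνpos).mpr (by rw [Ordinal.add_one_eq_succ]; exact Order.succ_le_of_lt hu)
    have h2 : ξ < ω ^ ν * u := by
      calc ξ = ω ^ ν * (ξ / ω ^ ν) + ξ % ω ^ ν := (Ordinal.div_add_mod _ _).symm
        _ < ω ^ ν * (ξ / ω ^ ν) + ω ^ ν := by
            exact (add_lt_add_iff_left _).mpr hrlt
        _ = ω ^ ν * (ξ / ω ^ ν + 1) := by rw [mul_add, mul_one]
        _ ≤ ω ^ ν * u := this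
    exact absurd hx2 (not_lt.mpr h2.le)
  obtain ⟨q, rfl⟩ := h1
  have hq0 : q ≠ 0 := by rintro rfl; simp at hξ0
  rcases Ordinal.zero_or_succ_or_isSuccLimit q with rfl | ⟨s, rfl⟩ | hql
  · exact absurd rfl hq0
  · exfalso
    have hplt : ω ^ ν * s < ω ^ ν * Order.succ s :=
      (mul_lt_mul_iff_right₀ hνpos).mpr (Order.lt_succ s)
    obtain ⟨x, ⟨hx0, u, rfl⟩, hx1, hx2⟩ := h _ hplt
    have h1 : s < u := (mul_lt_mul_iff_right₀ hνpos).mp hx1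
    have h2 : u < Order.succ s := (mul_lt_mul_iff_right₀ hνpos).mp hx2
    exact absurd h2 (not_lt.mpr (Order.succ_le_of_lt h1))
  · obtain ⟨t, rfl⟩ := Ordinal.isSuccLimit_iff_omega0_dvd.mp hql |>.2
    exact ⟨t, by rw [Ordinal.opow_add, Ordinal.opow_one, mul_assoc]⟩

end Aux

/-! ### Accumulation in the ordinal interval -/

namespace Aux

open Ordinal

lemma accE {α : Ordinal} {ξ : ↥(Set.Iic ((ω : Ordinal) ^ α))}
    {s : Set ↥(Set.Iic ((ω : Ordinal) ^ α))} {ν : Ordinal}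
    (hs : ∀ x : ↥(Set.Iic ((ω : Ordinal) ^ α)), (x : Ordinal) ≠ 0 →
      (x ∈ s ↔ ω ^ ν ∣ (x : Ordinal))) :
    AccPt ξ (𝓟 s) ↔ (ξ : Ordinal) ≠ 0 ∧ ω ^ (ν + 1) ∣ (ξ : Ordinal) := by
  rw [← accPt_image_iff IsInducing.subtypeVal Subtype.val_injective]
  rw [show AccPt (ξ : Ordinal) (𝓟 (Subtype.val '' s)) ↔
      Ordinal.IsAcc (ξ : Ordinal) (Subtype.val '' s) from Iff.rfl, Ordinal.isAcc_iff]
  constructor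
  · rintro ⟨h0, hforall⟩
    refine ⟨h0, dvd_of_acc_char h0 fun p hp => ?_⟩
    obtain ⟨x, hxs, hx1, hx2⟩ := hforall p hp
    obtain ⟨x', hx's, rfl⟩ := hxs
    have hx0 : (x' : Ordinal) ≠ 0 := (lt_of_le_of_lt zero_le hx1).ne'
    exact ⟨x', ⟨hx0, (hs x' hx0).mp hx's⟩, hx1, hx2⟩
  · rintro ⟨h0, hdvd⟩
    refine ⟨h0, fun p hp => ?_⟩
    obtain ⟨x, ⟨hx0, hxdvd⟩, hx1, hx2⟩ := acc_char_aux h0 hdvd hp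
    have hxle : x ≤ ω ^ α := le_trans hx2.le ξ.2
    exact ⟨x, ⟨⟨x, hxle⟩, (hs ⟨x, hxle⟩ hx0).mpr hxdvd, rfl⟩, hx1, hx2⟩

lemma forall_dvd_iff {γ ξ : Ordinal} (hξ : ξ ≠ 0) :
    (∀ δ < γ, ω ^ (δ + 1) ∣ ξ) ↔ ω ^ γ ∣ ξ := by
  rcases Ordinal.zero_or_succ_or_isSuccLimit γ with rfl | ⟨δ0, rfl⟩ | hlim
  · simp [Ordinal.opow_zero]
  · constructor
    · intro h
      rw [← Ordinal.add_one_eq_succ]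
      exact h δ0 (by rw [← Ordinal.add_one_eq_succ]; exact Order.lt_succ δ0)
    · intro h δ hδ
      refine dvd_trans (Ordinal.opow_dvd_opow ω ?_) h
      rw [← Ordinal.add_one_eq_succ]
      rw [Order.lt_succ_iff] at hδ
      exact add_le_add_left hδ 1
  · constructor
    · intro h
      refine opow_dvd_of_limit hlim fun δ hδ => ?_
      exact dvd_trans (Ordinal.opow_dvd_opow ω (le_of_lt (lt_add_one δ))) (h δ hδ)
    · intro h δ hδ
      exact dvd_trans (Ordinal.opow_dvd_opow ω (hlim.succ_lt hδ).le) h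

end Aux

/-! ### The Cantor compactification of an ordinal interval -/

namespace Aux

open Ordinal

variable (α : Ordinal.{0})

abbrev OI : Type 1 := ↥(Set.Iic ((ω : Ordinal.{0}) ^ α))

abbrev Ups : Type 1 := UpsilonC (OI α)

def pi : OI α × ↥cTilde → Ups α := Quotient.mk (upsilonSetoid (OI α))

variable {α}

lemma pi_eq_iff {p q : OI α × ↥cTilde} :
    pi α p = pi α q ↔ (p = q ∨ ((p.2 : ℝ) = (q.2 : ℝ) ∧ (p.2 : ℝ) ∈ cantorSet)) :=
  ⟨fun h => Quotient.exact h, fun h => Quotient.sound h⟩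

lemma pi_continuous : Continuous (pi α) := continuous_quotient_mk'

lemma pi_isQuotientMap : IsQuotientMap (pi α) := isQuotientMap_quotient_mk'

lemma pi_surjective : Function.Surjective (pi α) := Quotient.exists_rep

/-- The "Cantor set" part of the quotient. -/
def CS : Set (Ups α) := {x | ∃ p : OI α × ↥cTilde, x = pi α p ∧ (p.2 : ℝ) ∈ cantorSet}

/-- The slice part of the quotient over a set `D` of ordinals. -/
def MS (D : Set Ordinal.{0}) : Set (Ups α) :=
  {x | ∃ (e : OI α) (t : ↥cTilde), x = pi α (e, t) ∧ (t : ℝ) ∉ cantorSet ∧ (e : Ordinal) ∈ D}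

variable (α)

lemma ups_cases (x : Ups α) :
    x ∈ CS (α := α) ∨ ∃ (e : OI α) (t : ↥cTilde), x = pi α (e, t) ∧ (t : ℝ) ∉ cantorSet := by
  obtain ⟨⟨e, t⟩, rfl⟩ := pi_surjective (α := α) x
  by_cases ht : (t : ℝ) ∈ cantorSet
  · exact Or.inl ⟨(e, t), rfl, ht⟩
  · exact Or.inr ⟨e, t, rfl, ht⟩

variable {α}

lemma pi_not_mem_CS {e : OI α} {t : ↥cTilde} (ht : (t : ℝ) ∉ cantorSet) :
    pi α (e, t) ∉ CS := by
  rintro ⟨p, hp, hpc⟩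
  rcases pi_eq_iff.mp hp with rfl | ⟨h1, h2⟩
  · exact ht hpc
  · exact ht (h1 ▸ hpc)

lemma pi_mem_MS_iff {e : OI α} {t : ↥cTilde} (ht : (t : ℝ) ∉ cantorSet) {D : Set Ordinal} :
    pi α (e, t) ∈ MS D ↔ (e : Ordinal) ∈ D := by
  constructor
  · rintro ⟨e', t', h, ht', hD⟩
    rcases pi_eq_iff.mp h with h' | ⟨h1, h2⟩
    · obtain ⟨he, hte⟩ := Prod.mk.injEq .. ▸ h'
      cases h'
      exact hD
    · exact absurd (h1 ▸ h2) ht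
  · intro hD
    exact ⟨e, t, rfl, ht, hD⟩

/-- Isolated points of `C̃`. -/
lemma isOpen_singleton_mid {t : ↥cTilde} (ht : (t : ℝ) ∉ cantorSet) :
    IsOpen ({t} : Set ↥cTilde) := by
  have htm : (t : ℝ) ∈ midSet := t.2.resolve_left ht
  obtain ⟨U, hU, hmU, hUint⟩ := midSet_isolated htm
  have : ({t} : Set ↥cTilde) = Subtype.val ⁻¹' U := by
    ext t'
    simp only [Set.mem_singleton_iff, Set.mem_preimage]
    constructor
    · rintro rfl; exact hmU
    · intro ht'
      have : (t' : ℝ) ∈ U ∩ (cantorSet ∪ midSet) := ⟨ht', t'.2⟩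
      rw [hUint] at this
      exact Subtype.ext this
  rw [this]
  exact hU.preimage continuous_subtype_val

/-- Saturated open boxes have open images. -/
lemma pi_preimage_box {V : Set (OI α)} {t : ↥cTilde} (ht : (t : ℝ) ∉ cantorSet) :
    pi α ⁻¹' (pi α '' (V ×ˢ ({t} : Set ↥cTilde))) = V ×ˢ ({t} : Set ↥cTilde) := by
  apply Set.Subset.antisymm
  · rintro ⟨e', t'⟩ hmem
    obtain ⟨⟨e, s⟩, ⟨heV, hst⟩, hpi⟩ := hmem
    rcases pi_eq_iff.mp hpi.symm with h | ⟨h1, h2⟩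
    · rw [Set.mem_singleton_iff] at hst
      cases h
      exact ⟨heV, hst⟩
    · exfalso
      rw [Set.mem_singleton_iff] at hst
      subst hst
      rw [h1] at h2
      exact ht h2
  · exact Set.subset_preimage_image _ _

lemma isOpen_pi_box {V : Set (OI α)} (hV : IsOpen V) {t : ↥cTilde} (ht : (t : ℝ) ∉ cantorSet) :
    IsOpen (pi α '' (V ×ˢ ({t} : Set ↥cTilde))) := by
  rw [← (pi_isQuotientMap (α := α)).isOpen_preimage, pi_preimage_box ht]
  exact hV.prod (isOpen_singleton_mid ht)

/-- The slice inclusion. -/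
def phi (t : ↥cTilde) : OI α → Ups α := fun e => pi α (e, t)

lemma phi_injective {t : ↥cTilde} (ht : (t : ℝ) ∉ cantorSet) :
    Function.Injective (phi (α := α) t) := by
  intro e e' h
  rcases pi_eq_iff.mp h with h' | ⟨_, h2⟩
  · exact (Prod.ext_iff.mp h').1
  · exact absurd h2 ht

lemma phi_image {V : Set (OI α)} {t : ↥cTilde} :
    phi (α := α) t '' V = pi α '' (V ×ˢ ({t} : Set ↥cTilde)) := by
  ext x
  constructor
  · rintro ⟨e, he, rfl⟩; exact ⟨(e, t), ⟨he, rfl⟩, rfl⟩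
  · rintro ⟨⟨e, s⟩, ⟨he, hs⟩, rfl⟩
    rw [Set.mem_singleton_iff] at hs
    subst hs
    exact ⟨e, he, rfl⟩

lemma phi_preimage_pi_box {V : Set (OI α)} {t : ↥cTilde} (ht : (t : ℝ) ∉ cantorSet) :
    phi (α := α) t ⁻¹' (pi α '' (V ×ˢ ({t} : Set ↥cTilde))) = V := by
  ext e
  simp only [Set.mem_preimage]
  constructor
  · intro h
    have h2 : (e, t) ∈ pi α ⁻¹' (pi α '' (V ×ˢ ({t} : Set ↥cTilde))) := h
    rw [pi_preimage_box (α := α) ht] at h2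
    exact h2.1
  · intro h
    exact ⟨(e, t), ⟨h, rfl⟩, rfl⟩

lemma phi_isInducing {t : ↥cTilde} (ht : (t : ℝ) ∉ cantorSet) :
    IsInducing (phi (α := α) t) := by
  constructor
  refine le_antisymm ?_ ?_
  · intro s hs
    rw [isOpen_induced_iff] at hs
    obtain ⟨W, hW, rfl⟩ := hs
    exact hW.preimage (pi_continuous.comp (Continuous.prodMk_left t))
  · intro s hs
    rw [isOpen_induced_iff]
    exact ⟨pi α '' (s ×ˢ ({t} : Set ↥cTilde)), isOpen_pi_box hs ht, phi_preimage_pi_box ht⟩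

lemma phi_range_open {t : ↥cTilde} (ht : (t : ℝ) ∉ cantorSet) :
    IsOpen (Set.range (phi (α := α) t)) := by
  rw [← Set.image_univ, phi_image]
  exact isOpen_pi_box isOpen_univ ht

/-- Accumulation transfer to a slice. -/
lemma slice_acc {e : OI α} {t : ↥cTilde} (ht : (t : ℝ) ∉ cantorSet) (T : Set (Ups α)) :
    AccPt (pi α (e, t)) (𝓟 T) ↔ AccPt e (𝓟 (phi (α := α) t ⁻¹' T)) := by
  show AccPt (phi (α := α) t e) (𝓟 T) ↔ _
  rw [accPt_inter_open (phi_range_open ht) (Set.mem_range_self (f := phi (α := α) t) e),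
    ← Set.image_preimage_eq_inter_range,
    accPt_image_iff (phi_isInducing ht) (phi_injective ht)]

end Aux

/-! ### The characterization of the Cantor–Bendixson iterates -/

namespace Aux

open Ordinal

variable {α : Ordinal.{0}}

lemma cantor_acc {e0 : OI α} {tc : ↥cTilde} (hc : (tc : ℝ) ∈ cantorSet) {T : Set (Ups α)}
    (hT : CS (α := α) ⊆ T) : AccPt (pi α (e0, tc)) (𝓟 T) := by
  rw [accPt_iff_nhds]
  intro U hU
  have hW : pi α ⁻¹' U ∈ 𝓝 (e0, tc) := pi_continuous.continuousAt.preimage_mem_nhds hU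
  rw [mem_nhds_prod_iff] at hW
  obtain ⟨A, hA, B, hB, hAB⟩ := hW
  rw [IsInducing.subtypeVal.nhds_eq_comap, Filter.mem_comap] at hB
  obtain ⟨B', hB', hB'sub⟩ := hB
  obtain ⟨y, ⟨hyB', hyC⟩, hyne⟩ := accPt_iff_nhds.mp (cantorSet_acc hc) B' hB'
  set tc' : ↥cTilde := ⟨y, Or.inl hyC⟩ with htc'
  refine ⟨pi α (e0, tc'), ⟨?_, hT ⟨(e0, tc'), rfl, hyC⟩⟩, ?_⟩
  · exact hAB ⟨mem_of_mem_nhds hA, hB'sub hyB'⟩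
  · intro heq
    rcases pi_eq_iff.mp heq with h | ⟨h1, _⟩
    · exact hyne (congrArg (fun p => ((p.2 : ℝ) : ℝ)) h)
    · exact hyne h1

theorem CB_char (γ : Ordinal.{0}) :
    CB (Ups α) γ = CS (α := α) ∪ MS {ξ | ξ ≠ 0 ∧ (ω : Ordinal) ^ (γ + 1) ∣ ξ} := by
  induction γ using Ordinal.lt_wf.induction with
  | _ γ ih =>
  have hInter : (⋂ δ : Set.Iio γ, CB (Ups α) δ.1) =
      CS (α := α) ∪ MS {ξ | ∀ δ < γ, ξ ≠ 0 ∧ (ω : Ordinal) ^ (δ + 1) ∣ ξ} := by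
    ext x
    rw [Set.mem_iInter]
    rcases ups_cases α x with hx | ⟨e, t, rfl, ht⟩
    · constructor
      · intro _; exact Or.inl hx
      · intro _ δ; rw [ih δ.1 δ.2]; exact Or.inl hx
    · have hnCS := pi_not_mem_CS (α := α) (e := e) ht
      constructor
      · intro h
        refine Or.inr ((pi_mem_MS_iff ht).mpr ?_)
        intro δ hδ
        have h1 := h ⟨δ, hδ⟩
        rw [ih δ hδ] at h1
        rcases h1 with h1 | h1
        · exact absurd h1 hnCS
        · exact (pi_mem_MS_iff ht).mp h1
      · intro h δ
        rcases h with h | h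
        · exact absurd h hnCS
        · rw [ih δ.1 δ.2]
          exact Or.inr ((pi_mem_MS_iff ht).mpr ((pi_mem_MS_iff ht).mp h δ.1 δ.2))
  rw [CB_eq, hInter]
  set D : Set Ordinal.{0} := {ξ | ∀ δ < γ, ξ ≠ 0 ∧ (ω : Ordinal) ^ (δ + 1) ∣ ξ} with hD
  have hCST : CS (α := α) ⊆ CS (α := α) ∪ MS D := Set.subset_union_left
  ext x
  rcases ups_cases α x with hx | ⟨e, t, rfl, ht⟩
  · constructor
    · intro _
      exact Or.inl hx
    · intro _
      obtain ⟨⟨e0, tc⟩, rfl, hc⟩ := hx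
      exact ⟨Or.inl ⟨(e0, tc), rfl, hc⟩, cantor_acc hc hCST⟩
  · have hnCS := pi_not_mem_CS (α := α) (e := e) ht
    have hphiT : phi (α := α) t ⁻¹' (CS (α := α) ∪ MS D) = {e' : OI α | (e' : Ordinal) ∈ D} := by
      ext e'
      simp only [Set.mem_preimage, Set.mem_union, Set.mem_setOf_eq]
      constructor
      · rintro (h | h)
        · exact absurd h (pi_not_mem_CS ht)
        · exact (pi_mem_MS_iff ht).mp h
      · intro h; exact Or.inr ((pi_mem_MS_iff ht).mpr h)
    have hacc : AccPt (pi α (e, t)) (𝓟 (CS (α := α) ∪ MS D)) ↔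
        (e : Ordinal) ≠ 0 ∧ (ω : Ordinal) ^ (γ + 1) ∣ (e : Ordinal) := by
      rw [slice_acc ht, hphiT]
      refine accE fun x hx0 => ?_
      simp only [Set.mem_setOf_eq, hD]
      constructor
      · intro h
        exact (forall_dvd_iff hx0).mp fun δ hδ => (h δ hδ).2
      · intro h δ hδ
        exact ⟨hx0, (forall_dvd_iff hx0).mpr h δ hδ⟩
    have hmemT : pi α (e, t) ∈ CS (α := α) ∪ MS D ↔ (e : Ordinal) ∈ D := by
      constructor
      · rintro (h | h)
        · exact absurd h hnCS
        · exact (pi_mem_MS_iff ht).mp h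
      · intro h; exact Or.inr ((pi_mem_MS_iff ht).mpr h)
    constructor
    · rintro ⟨hmem, haccpt⟩
      exact Or.inr ((pi_mem_MS_iff ht).mpr (hacc.mp haccpt))
    · rintro (h | h)
      · exact absurd h hnCS
      · have h2 := (pi_mem_MS_iff ht).mp h
        refine ⟨hmemT.mpr fun δ hδ => ⟨h2.1, ?_⟩, hacc.mpr h2⟩
        exact dvd_trans (Ordinal.opow_dvd_opow ω (add_le_add_left hδ.le 1)) h2.2

lemma MS_eq_empty {D : Set Ordinal.{0}} (h : ∀ ξ ∈ D, ¬ ξ ≤ (ω : Ordinal) ^ α) :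
    MS (α := α) D = ∅ := by
  ext x
  simp only [Set.mem_empty_iff_false, iff_false]
  rintro ⟨e, t, rfl, ht, hD⟩
  exact h e hD e.2

lemma CB_high {γ : Ordinal.{0}} (hγ : α ≤ γ) : CB (Ups α) γ = CS (α := α) := by
  rw [CB_char, MS_eq_empty, Set.union_empty]
  rintro ξ ⟨hξ0, hdvd⟩ hle
  have h1 : (ω : Ordinal) ^ (γ + 1) ≤ ξ := Ordinal.le_of_dvd (pos_iff_ne_zero.mp ?_) hdvd
  · have h2 : (ω : Ordinal) ^ α < (ω : Ordinal) ^ (γ + 1) := by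
      rw [Ordinal.opow_lt_opow_iff_right one_lt_omega0]
      exact lt_of_le_of_lt hγ (lt_add_one γ)
    exact absurd hle (not_le.mpr (lt_of_lt_of_le h2 h1))
  · exact pos_iff_ne_zero.mpr hξ0

lemma key_point {β : Ordinal.{0}} (hlt : α < β) :
    ∃ x : Ups β, x ∈ CB (Ups β) α ∧ x ∉ CB (Ups β) (α + 1) := by
  have hle : (ω : Ordinal) ^ (α + 1) ≤ (ω : Ordinal) ^ β :=
    Ordinal.opow_le_opow_right omega0_pos (Order.add_one_le_of_lt hlt)
  set e : OI β := ⟨(ω : Ordinal) ^ (α + 1), hle⟩ with he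
  set t : ↥cTilde := ⟨1/2, Or.inr half_mem_midSet⟩ with htdef
  have ht : (t : ℝ) ∉ cantorSet := midSet_not_mem_cantorSet half_mem_midSet
  have hne : ((ω : Ordinal) ^ (α + 1)) ≠ 0 := (Ordinal.opow_pos _ omega0_pos).ne'
  refine ⟨pi β (e, t), ?_, ?_⟩
  · rw [CB_char]
    exact Or.inr ((pi_mem_MS_iff ht).mpr ⟨hne, dvd_refl _⟩)
  · rw [CB_char]
    rintro (h | h)
    · exact pi_not_mem_CS ht h
    · have h2 := ((pi_mem_MS_iff ht).mp h).2
      rw [Ordinal.opow_dvd_opow_iff one_lt_omega0] at h2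
      exact absurd h2 (not_le.mpr (lt_add_one (α + 1)))

lemma no_homeo {β : Ordinal.{0}} (hlt : α < β) (h : Ups α ≃ₜ Ups β) : False := by
  have h1 : CB (Ups β) α = CB (Ups β) (α + 1) := by
    rw [CB_homeomorph h α, CB_homeomorph h (α + 1),
      CB_high (le_refl α), CB_high (le_of_lt (lt_add_one α))]
  obtain ⟨x, hx1, hx2⟩ := key_point (α := α) hlt
  rw [h1] at hx1
  exact hx2 hx1

end Aux

/-- **Uncountably many Cantor compactifications.**  For distinct countable ordinals
`α ≠ β`, the Cantor compactifications `Υ^C([0, ω^α])` and `Υ^C([0, ω^β])` are not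
homeomorphic. -/
theorem stmt14 (α β : Ordinal.{0})
    (hα : α.card ≤ Cardinal.aleph0) (hβ : β.card ≤ Cardinal.aleph0) (hne : α ≠ β) :
    IsEmpty
      (UpsilonC ↥(Set.Iic (Ordinal.omega0 ^ α)) ≃ₜ
        UpsilonC ↥(Set.Iic (Ordinal.omega0 ^ β))) := by
  constructor
  intro h
  rcases hne.lt_or_gt with hlt | hlt
  · exact Aux.no_homeo hlt h
  · exact Aux.no_homeo hlt h.symm
end
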